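/- arXiv:2402.11437 — 8 statements merged into one kernel-verified Lean document; each statement's English description precedes it below -/
import Mathlib

section
/- For the assignment game on a bipartite graph G = (U, V, E) with positive edge weights w, an imputation (u, v) is in the core if and only if it is an optimal solution to the dual of the LP relaxation of maximum weight bipartite matching, i.e., u_i + v_j ≥ w_{ij} for all edges (i,j), all u_i, v_j ≥ 0, and the total sum equals the maximum weight of a matching in G. -/
open scoped Classical

/-- `M` is a matching in the bipartite graph with edge set `E`. -/
def IsMatching {U V : Type*} (E M : Finset (U × V)) : Prop :=
  M ⊆ E ∧ (∀ e ∈ M, ∀ e' ∈ M, e.1 = e'.1 → e = e') ∧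
    (∀ e ∈ M, ∀ e' ∈ M, e.2 = e'.2 → e = e')

/-- Total weight of a set of edges. -/
def matchWeight {U V : Type*} (w : U × V → ℚ) (M : Finset (U × V)) : ℚ :=
  ∑ e ∈ M, w e

/-- Maximum weight of a matching in `(E, w)`. -/
noncomputable def maxWeight {U V : Type*} [DecidableEq U] [DecidableEq V]
    (E : Finset (U × V)) (w : U × V → ℚ) : ℚ :=
  ((E.powerset).filter (fun M => IsMatching E M)).sup'
    ⟨∅, by simp [IsMatching]⟩ (matchWeight w)

/-- `M` is a maximum weight matching. -/
def IsMaxMatching {U V : Type*} [DecidableEq U] [DecidableEq V]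
    (E : Finset (U × V)) (w : U × V → ℚ) (M : Finset (U × V)) : Prop :=
  IsMatching E M ∧ matchWeight w M = maxWeight E w

/-- Core imputations of the assignment game (Shapley–Shubik characterization
as optimal dual solutions). -/
def InCore {U V : Type*} [Fintype U] [Fintype V] [DecidableEq U] [DecidableEq V]
    (E : Finset (U × V)) (w : U × V → ℚ) (u : U → ℚ) (v : V → ℚ) : Prop :=
  (∀ i, 0 ≤ u i) ∧ (∀ j, 0 ≤ v j) ∧ (∀ e ∈ E, w e ≤ u e.1 + v e.2) ∧
    (∑ i, u i) + (∑ j, v j) = maxWeight E w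

/-- A vertex (from either side) is matched in `M`. -/
def MatchedIn {U V : Type*} (M : Finset (U × V)) : U ⊕ V → Prop
  | Sum.inl i => ∃ j, (i, j) ∈ M
  | Sum.inr j => ∃ i, (i, j) ∈ M

/-- A vertex is essential if it is matched in every maximum weight matching. -/
def EssentialVertex {U V : Type*} [DecidableEq U] [DecidableEq V]
    (E : Finset (U × V)) (w : U × V → ℚ) (q : U ⊕ V) : Prop :=
  ∀ M, IsMaxMatching E w M → MatchedIn M q

/-- Worth of the sub-coalition `U' ∪ V'`: the maximum weight of a matching in
the subgraph induced on the sub-coalition. -/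
noncomputable def worth {U V : Type*} [DecidableEq U] [DecidableEq V]
    (E : Finset (U × V)) (w : U × V → ℚ) (U' : Finset U) (V' : Finset V) : ℚ :=
  maxWeight (E.filter (fun e => e.1 ∈ U' ∧ e.2 ∈ V')) w

/-- **Shapley–Shubik.** A nonnegative imputation is in the (coalitional) core of
the assignment game iff it is an optimal dual solution: all dual edge
constraints hold and the total equals the maximum weight of a matching. -/
theorem core_iff_optimal_dual {U V : Type*} [Fintype U] [Fintype V]
    [DecidableEq U] [DecidableEq V]
    (E : Finset (U × V)) (w : U × V → ℚ) (hw : ∀ e ∈ E, 0 < w e)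
    (u : U → ℚ) (v : V → ℚ) (hu : ∀ i, 0 ≤ u i) (hv : ∀ j, 0 ≤ v j)
    (himp : (∑ i, u i) + (∑ j, v j) = worth E w Finset.univ Finset.univ) :
    (∀ (U' : Finset U) (V' : Finset V),
        worth E w U' V' ≤ (∑ i ∈ U', u i) + (∑ j ∈ V', v j)) ↔
      ((∀ e ∈ E, w e ≤ u e.1 + v e.2) ∧
        (∑ i, u i) + (∑ j, v j) = maxWeight E w) := by

  have hmw : worth E w Finset.univ Finset.univ = maxWeight E w := by
    unfold worth; congr 1; simp
  constructor
  · intro h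
    refine ⟨?_, by rw [himp, hmw]⟩
    intro e he
    have h1 := h {e.1} {e.2}
    have h2 : w e ≤ worth E w {e.1} {e.2} := by
      unfold worth maxWeight
      have hmem : ({e} : Finset (U × V)) ∈
          ((E.filter (fun e' => e'.1 ∈ ({e.1} : Finset U) ∧ e'.2 ∈ ({e.2} : Finset V))).powerset).filter
            (fun M => IsMatching (E.filter (fun e' => e'.1 ∈ ({e.1} : Finset U) ∧ e'.2 ∈ ({e.2} : Finset V))) M) := by
        simp only [Finset.mem_filter, Finset.mem_powerset]
        have hs : ({e} : Finset (U × V)) ⊆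
            E.filter (fun e' => e'.1 ∈ ({e.1} : Finset U) ∧ e'.2 ∈ ({e.2} : Finset V)) := by
          intro x hx
          simp only [Finset.mem_singleton] at hx
          subst hx
          simp [he]
        refine ⟨hs, hs, ?_, ?_⟩ <;>
          · intro a ha b hb _
            simp only [Finset.mem_singleton] at ha hb
            rw [ha, hb]
      calc w e = matchWeight w {e} := by simp [matchWeight]
        _ ≤ _ := Finset.le_sup' (matchWeight w) hmem
    simp only [Finset.sum_singleton] at h1
    linarith
  · rintro ⟨hfeas, _⟩ U' V'
    unfold worth maxWeight
    apply Finset.sup'_le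
    intro M hM
    simp only [Finset.mem_filter, Finset.mem_powerset] at hM
    obtain ⟨-, hsub, hinj1, hinj2⟩ := hM
    have hMe : ∀ e ∈ M, e ∈ E ∧ e.1 ∈ U' ∧ e.2 ∈ V' := by
      intro e heM
      simpa using Finset.mem_filter.mp (hsub heM)
    have step1 : matchWeight w M ≤ ∑ e ∈ M, (u e.1 + v e.2) := by
      apply Finset.sum_le_sum
      intro e heM
      exact hfeas e (hMe e heM).1
    have e1 : ∑ e ∈ M, u e.1 = ∑ i ∈ M.image Prod.fst, u i := by
      rw [Finset.sum_image]
      intro a ha b hb hab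
      exact hinj1 a ha b hb hab
    have e2 : ∑ e ∈ M, v e.2 = ∑ j ∈ M.image Prod.snd, v j := by
      rw [Finset.sum_image]
      intro a ha b hb hab
      exact hinj2 a ha b hb hab
    have s1 : ∑ i ∈ M.image Prod.fst, u i ≤ ∑ i ∈ U', u i := by
      apply Finset.sum_le_sum_of_subset_of_nonneg
      · intro i hi
        obtain ⟨e, heM, rfl⟩ := Finset.mem_image.mp hi
        exact (hMe e heM).2.1
      · intro i _ _; exact hu i
    have s2 : ∑ j ∈ M.image Prod.snd, v j ≤ ∑ j ∈ V', v j := by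
      apply Finset.sum_le_sum_of_subset_of_nonneg
      · intro j hj
        obtain ⟨e, heM, rfl⟩ := Finset.mem_image.mp hj
        exact (hMe e heM).2.2
      · intro j _ _; exact hv j
    calc matchWeight w M ≤ ∑ e ∈ M, (u e.1 + v e.2) := step1
      _ = (∑ e ∈ M, u e.1) + ∑ e ∈ M, v e.2 := Finset.sum_add_distrib
      _ ≤ (∑ i ∈ U', u i) + ∑ j ∈ V', v j := by rw [e1, e2]; exact add_le_add s1 s2
end

section
/- Define a partial order on core imputations of the assignment game by (u,v) ≤ (u',v') iff u_i ≥ u'_i for all i ∈ U. Then for any two core imputations (u,v), (u',v'), the pair (max(u,u'), min(v,v')) (componentwise) is again a core imputation. -/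
open scoped Classical

/-! Both `(max u u', min v v')` and `(min u u', max v v')` are feasible duals: on each edge, the
imputation attaining the `min` already covers the weight, and the other side only grows under
`max`. Their total values add up to twice the maximum matching weight, and by weak duality neither
is below it, so both attain it. -/

theorem le_max_add_min {α : Type*} [AddCommMonoid α] [LinearOrder α] [IsOrderedAddMonoid α]
    {c a b a' b' : α} (h : c ≤ a + b) (h' : c ≤ a' + b') : c ≤ max a a' + min b b' := by
  rcases le_total b b' with hb | hb
  · rw [min_eq_left hb]
    exact h.trans (add_le_add_left (le_max_left a a') b)
  · rw [min_eq_right hb]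
    exact h'.trans (add_le_add_left (le_max_right a a') b')

theorem Finset.sum_max_add_sum_min {ι α : Type*} [AddCommMonoid α] [LinearOrder α]
    (s : Finset ι) (f g : ι → α) :
    ∑ i ∈ s, max (f i) (g i) + ∑ i ∈ s, min (f i) (g i) = ∑ i ∈ s, f i + ∑ i ∈ s, g i := by
  simp only [← Finset.sum_add_distrib, max_add_min]

def IsFeasibleDual {U V : Type*} (E : Finset (U × V)) (w : U × V → ℚ) (u : U → ℚ) (v : V → ℚ) :
    Prop :=
  (∀ i, 0 ≤ u i) ∧ (∀ j, 0 ≤ v j) ∧ ∀ e ∈ E, w e ≤ u e.1 + v e.2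

theorem inCore_iff {U V : Type*} [Fintype U] [Fintype V] [DecidableEq U] [DecidableEq V]
    {E : Finset (U × V)} {w : U × V → ℚ} {u : U → ℚ} {v : V → ℚ} :
    InCore E w u v ↔ IsFeasibleDual E w u v ∧ (∑ i, u i) + (∑ j, v j) = maxWeight E w := by
  simp only [InCore, IsFeasibleDual, and_assoc]

namespace IsFeasibleDual

variable {U V : Type*} {E : Finset (U × V)} {w : U × V → ℚ} {u u' : U → ℚ} {v v' : V → ℚ}

theorem meet (h : IsFeasibleDual E w u v) (h' : IsFeasibleDual E w u' v') :
    IsFeasibleDual E w (fun i => max (u i) (u' i)) (fun j => min (v j) (v' j)) :=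
  ⟨fun i => le_max_of_le_left (h.1 i), fun j => le_min (h.2.1 j) (h'.2.1 j),
    fun e he => le_max_add_min (h.2.2 e he) (h'.2.2 e he)⟩

theorem join (h : IsFeasibleDual E w u v) (h' : IsFeasibleDual E w u' v') :
    IsFeasibleDual E w (fun i => min (u i) (u' i)) (fun j => max (v j) (v' j)) :=
  ⟨fun i => le_min (h.1 i) (h'.1 i), fun j => le_max_of_le_left (h.2.1 j),
    fun e he => (le_max_add_min ((h.2.2 e he).trans_eq (add_comm _ _))
      ((h'.2.2 e he).trans_eq (add_comm _ _))).trans_eq (add_comm _ _)⟩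

variable [Fintype U] [Fintype V]

theorem matchWeight_le {M : Finset (U × V)} (hM : IsMatching E M) (h : IsFeasibleDual E w u v) :
    matchWeight w M ≤ (∑ i, u i) + (∑ j, v j) := by
  calc matchWeight w M ≤ ∑ e ∈ M, (u e.1 + v e.2) :=
        Finset.sum_le_sum fun e he => h.2.2 e (hM.1 he)
    _ = (∑ i ∈ M.image Prod.fst, u i) + (∑ j ∈ M.image Prod.snd, v j) := by
        rw [Finset.sum_add_distrib, Finset.sum_image fun e he e' he' => hM.2.1 e he e' he',
          Finset.sum_image fun e he e' he' => hM.2.2 e he e' he']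
    _ ≤ (∑ i, u i) + (∑ j, v j) :=
        add_le_add
          (Finset.sum_le_sum_of_subset_of_nonneg (Finset.subset_univ _) fun i _ _ => h.1 i)
          (Finset.sum_le_sum_of_subset_of_nonneg (Finset.subset_univ _) fun j _ _ => h.2.1 j)

theorem maxWeight_le [DecidableEq U] [DecidableEq V] (h : IsFeasibleDual E w u v) :
    maxWeight E w ≤ (∑ i, u i) + (∑ j, v j) :=
  Finset.sup'_le _ _ fun _ hM => h.matchWeight_le (Finset.mem_filter.mp hM).2

end IsFeasibleDual

/-- The lattice meet of two core imputations (componentwise max on the `U` side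
and min on the `V` side) is again a core imputation. -/
theorem core_meet {U V : Type*} [Fintype U] [Fintype V]
    [DecidableEq U] [DecidableEq V]
    (E : Finset (U × V)) (w : U × V → ℚ)
    (u : U → ℚ) (v : V → ℚ) (u' : U → ℚ) (v' : V → ℚ)
    (h : InCore E w u v) (h' : InCore E w u' v') :
    InCore E w (fun i => max (u i) (u' i)) (fun j => min (v j) (v' j)) := by
  rw [inCore_iff] at h h' ⊢
  obtain ⟨hfeas, hval⟩ := h
  obtain ⟨hfeas', hval'⟩ := h'
  have hmeet := hfeas.meet hfeas'
  have hjoin := (hfeas.join hfeas').maxWeight_le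
  have hU := Finset.sum_max_add_sum_min Finset.univ u u'
  have hV := Finset.sum_max_add_sum_min Finset.univ v v'
  exact ⟨hmeet, le_antisymm (by linarith) hmeet.maxWeight_le⟩
end

section
/- In any core imputation of the assignment game, every vertex that is unmatched in some maximum weight matching receives profit 0. Equivalently, if a vertex q gets positive profit in some core imputation, then q is matched in every maximum weight matching (q is essential). -/
open scoped Classical

/-- In any core imputation, a vertex unmatched in some maximum weight matching
receives profit `0`; equivalently, a vertex getting positive profit in some
core imputation is essential. -/
theorem paid_implies_essential {U V : Type*} [Fintype U] [Fintype V]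
    [DecidableEq U] [DecidableEq V]
    (E : Finset (U × V)) (w : U × V → ℚ)
    (u : U → ℚ) (v : V → ℚ) (h : InCore E w u v) :
    (∀ q : U ⊕ V, (∃ M, IsMaxMatching E w M ∧ ¬ MatchedIn M q) →
        Sum.elim u v q = 0) ∧
      (∀ q : U ⊕ V, 0 < Sum.elim u v q → EssentialVertex E w q) := by
  obtain ⟨hu, hv, hfeas, htot⟩ := h
  have main : ∀ q : U ⊕ V, (∃ M, IsMaxMatching E w M ∧ ¬ MatchedIn M q) →
      Sum.elim u v q = 0 := by
    intro q ⟨M, ⟨⟨hME, hinj1, hinj2⟩, hMw⟩, hq⟩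
    set A : Finset U := M.image Prod.fst with hA
    set B : Finset V := M.image Prod.snd with hB
    have hsumA : ∑ a ∈ A, u a = ∑ e ∈ M, u e.1 :=
      Finset.sum_image (fun x hx y hy hxy => hinj1 x hx y hy hxy)
    have hsumB : ∑ b ∈ B, v b = ∑ e ∈ M, v e.2 :=
      Finset.sum_image (fun x hx y hy hxy => hinj2 x hx y hy hxy)
    have h1 : matchWeight w M ≤ ∑ a ∈ A, u a + ∑ b ∈ B, v b := by
      rw [hsumA, hsumB, ← Finset.sum_add_distrib]
      exact Finset.sum_le_sum (fun e he => hfeas e (hME he))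
    have hAle : ∑ a ∈ A, u a ≤ ∑ i, u i :=
      Finset.sum_le_sum_of_subset_of_nonneg (Finset.subset_univ A)
        (fun i _ _ => hu i)
    have hBle : ∑ b ∈ B, v b ≤ ∑ j, v j :=
      Finset.sum_le_sum_of_subset_of_nonneg (Finset.subset_univ B)
        (fun j _ _ => hv j)
    have heq : ∑ a ∈ A, u a + ∑ b ∈ B, v b = (∑ i, u i) + (∑ j, v j) := by
      have h2 : (∑ i, u i) + (∑ j, v j) ≤ ∑ a ∈ A, u a + ∑ b ∈ B, v b := by
        rw [htot, ← hMw]; exact h1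
      linarith [add_le_add hAle hBle]
    have hAeq : ∑ a ∈ A, u a = ∑ i, u i := by linarith
    have hBeq : ∑ b ∈ B, v b = ∑ j, v j := by linarith
    match q with
    | Sum.inl i =>
      have hiA : i ∉ A := by
        intro hi
        obtain ⟨e, he, he1⟩ := Finset.mem_image.mp hi
        exact hq ⟨e.2, by rw [← he1]; simpa using he⟩
      have hz : ∑ a ∈ Finset.univ \ A, u a = 0 := by
        have := Finset.sum_sdiff_eq_sub (Finset.subset_univ A) (f := u)
        rw [this, hAeq, sub_self]
      have := (Finset.sum_eq_zero_iff_of_nonneg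
        (fun i _ => hu i)).mp hz i (by simp [hiA])
      simpa using this
    | Sum.inr j =>
      have hjB : j ∉ B := by
        intro hj
        obtain ⟨e, he, he2⟩ := Finset.mem_image.mp hj
        exact hq ⟨e.1, by rw [← he2]; simpa using he⟩
      have hz : ∑ b ∈ Finset.univ \ B, v b = 0 := by
        have := Finset.sum_sdiff_eq_sub (Finset.subset_univ B) (f := v)
        rw [this, hBeq, sub_self]
      have := (Finset.sum_eq_zero_iff_of_nonneg
        (fun j _ => hv j)).mp hz j (by simp [hjB])
      simpa using this
  refine ⟨main, fun q hpos M hM => ?_⟩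
  by_contra hnm
  have := main q ⟨M, hM, hnm⟩
  rw [this] at hpos
  exact lt_irrefl 0 hpos
end

section
/- For every subpar edge e of the assignment game, there exists a core imputation under which e is strictly over-tight, i.e., u_i + v_j > w_{ij}. -/
open scoped Classical

set_option linter.unusedSectionVars false


namespace Subpar

variable {U V : Type*} [DecidableEq U] [DecidableEq V]

/-- vertex `i : U` is exposed (unmatched) in `M`. -/
def expU (M : Finset (U × V)) (i : U) : Prop := ∀ j, (i, j) ∉ M
/-- vertex `j : V` is exposed (unmatched) in `M`. -/
def expV (M : Finset (U × V)) (j : V) : Prop := ∀ i, (i, j) ∉ M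

lemma fst_unique {E M : Finset (U × V)} (hM : IsMatching E M) {a : U} {b b' : V}
    (h : (a, b) ∈ M) (h' : (a, b') ∈ M) : b = b' := by
  have := hM.2.1 _ h _ h' rfl
  exact congrArg Prod.snd this

lemma snd_unique {E M : Finset (U × V)} (hM : IsMatching E M) {a a' : U} {b : V}
    (h : (a, b) ∈ M) (h' : (a', b) ∈ M) : a = a' := by
  have := hM.2.2 _ h _ h' rfl
  exact congrArg Prod.fst this

lemma matching_empty (E : Finset (U × V)) : IsMatching E (∅ : Finset (U × V)) := by
  simp [IsMatching]

lemma matching_single {E : Finset (U × V)} {e : U × V} (he : e ∈ E) : IsMatching E {e} := by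
  refine ⟨by simpa using he, ?_, ?_⟩ <;>
  · intro a ha b hb _
    simp only [Finset.mem_singleton] at ha hb
    rw [ha, hb]

lemma matching_erase {E M : Finset (U × V)} (hM : IsMatching E M) (e : U × V) :
    IsMatching E (M.erase e) := by
  obtain ⟨h0, h1, h2⟩ := hM
  exact ⟨fun x hx => h0 (Finset.mem_of_mem_erase hx),
    fun a ha b hb h => h1 _ (Finset.mem_of_mem_erase ha) _ (Finset.mem_of_mem_erase hb) h,
    fun a ha b hb h => h2 _ (Finset.mem_of_mem_erase ha) _ (Finset.mem_of_mem_erase hb) h⟩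

lemma matching_insert {E M : Finset (U × V)} (hM : IsMatching E M) {a : U} {b : V}
    (hE : (a, b) ∈ E) (ha : expU M a) (hb : expV M b) :
    IsMatching E (insert (a, b) M) := by
  obtain ⟨h0, h1, h2⟩ := hM
  refine ⟨?_, ?_, ?_⟩
  · intro x hx
    rcases Finset.mem_insert.mp hx with rfl | hx
    · exact hE
    · exact h0 hx
  · intro x hx y hy hfst
    rcases Finset.mem_insert.mp hx with rfl | hx <;> rcases Finset.mem_insert.mp hy with rfl | hy
    · rfl
    · exact absurd hy (by
        have hyeq : y = (a, y.2) := Prod.ext_iff.mpr ⟨hfst.symm, rfl⟩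
        rw [hyeq]; exact ha y.2)
    · exact absurd hx (by
        have hxeq : x = (a, x.2) := Prod.ext_iff.mpr ⟨hfst, rfl⟩
        rw [hxeq]; exact ha x.2)
    · exact h1 _ hx _ hy hfst
  · intro x hx y hy hsnd
    rcases Finset.mem_insert.mp hx with rfl | hx <;> rcases Finset.mem_insert.mp hy with rfl | hy
    · rfl
    · exact absurd hy (by
        have hyeq : y = (y.1, b) := Prod.ext_iff.mpr ⟨rfl, hsnd.symm⟩
        rw [hyeq]; exact hb y.1)
    · exact absurd hx (by
        have hxeq : x = (x.1, b) := Prod.ext_iff.mpr ⟨rfl, hsnd⟩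
        rw [hxeq]; exact hb x.1)
    · exact h2 _ hx _ hy hsnd

lemma mem_cands {E M : Finset (U × V)} (hM : IsMatching E M) :
    M ∈ (E.powerset).filter (fun M => IsMatching E M) := by
  simp only [Finset.mem_filter, Finset.mem_powerset]
  exact ⟨hM.1, hM⟩

lemma le_maxWeight {E M : Finset (U × V)} {w : U × V → ℚ} (hM : IsMatching E M) :
    matchWeight w M ≤ maxWeight E w :=
  Finset.le_sup' (matchWeight w) (mem_cands hM)

lemma exists_maxMatching (E : Finset (U × V)) (w : U × V → ℚ) :
    ∃ M, IsMaxMatching E w M := by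
  obtain ⟨M, hMmem, hMeq⟩ := Finset.exists_mem_eq_sup'
    (⟨∅, by simp [IsMatching]⟩ : ((E.powerset).filter (fun M => IsMatching E M)).Nonempty)
    (matchWeight w)
  simp only [Finset.mem_filter, Finset.mem_powerset] at hMmem
  exact ⟨M, hMmem.2, hMeq.symm⟩

lemma maxWeight_nonneg (E : Finset (U × V)) (w : U × V → ℚ) : 0 ≤ maxWeight E w := by
  have := le_maxWeight (E := E) (w := w) (matching_empty E)
  simpa [matchWeight] using this

lemma edge_le_maxWeight {E : Finset (U × V)} {w : U × V → ℚ} {e : U × V} (he : e ∈ E) :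
    w e ≤ maxWeight E w := by
  have := le_maxWeight (w := w) (matching_single he)
  simpa [matchWeight] using this

lemma maxWeight_le {E : Finset (U × V)} {w : U × V → ℚ} {c : ℚ}
    (h : ∀ M, IsMatching E M → matchWeight w M ≤ c) : maxWeight E w ≤ c := by
  apply Finset.sup'_le
  intro M hM
  simp only [Finset.mem_filter, Finset.mem_powerset] at hM
  exact h M hM.2


lemma matchWeight_insert {M : Finset (U × V)} {w : U × V → ℚ} {e : U × V} (h : e ∉ M) :
    matchWeight w (insert e M) = w e + matchWeight w M := by
  simp [matchWeight, Finset.sum_insert h]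

lemma matchWeight_erase {M : Finset (U × V)} {w : U × V → ℚ} {e : U × V} (h : e ∈ M) :
    matchWeight w (M.erase e) = matchWeight w M - w e := by
  have := Finset.sum_erase_add M w h
  simp only [matchWeight]
  linarith [Finset.sum_erase_add M w h]

lemma swap_lemma (E : Finset (U × V)) (w : U × V → ℚ) :
    ∀ n : ℕ, ∀ M1 M2 : Finset (U × V), M2.card ≤ n →
    IsMatching E M1 → IsMatching E M2 → ∀ i : U, expU M1 i →
    ∃ N1 N2 : Finset (U × V), IsMatching E N1 ∧ IsMatching E N2 ∧
      matchWeight w N1 + matchWeight w N2 = matchWeight w M1 + matchWeight w M2 ∧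
      expU N2 i ∧
      (∀ j, expV M2 j → expV N2 j) ∧
      (∀ i', i' ≠ i → expU M1 i' → expU N1 i') ∧
      (∀ j, expV M1 j → expV M2 j → expV N1 j) ∧
      (∀ i', i' ≠ i → expU M1 i' → expU M2 i' → expU N2 i') := by
  intro n
  induction n with
  | zero =>
    intro M1 M2 hcard hM1 hM2 i hi
    have hM2e : M2 = ∅ := Finset.card_eq_zero.mp (Nat.le_zero.mp hcard)
    subst hM2e
    exact ⟨M1, ∅, hM1, matching_empty E, rfl, by simp [expU],
      fun j h => h, fun i' _ h => h, fun j h _ => h, fun i' _ _ _ => by simp [expU]⟩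
  | succ n ih =>
    intro M1 M2 hcard hM1 hM2 i hi
    by_cases hi2 : expU M2 i
    · exact ⟨M1, M2, hM1, hM2, rfl, hi2,
        fun j h => h, fun i' _ h => h, fun j h _ => h, fun i' _ _ h => h⟩
    rw [expU] at hi2; push_neg at hi2
    obtain ⟨b, hb⟩ := hi2
    by_cases hbM1 : expV M1 b
    · -- b exposed in M1 : transfer the edge (i,b) from M2 to M1
      refine ⟨insert (i, b) M1, M2.erase (i, b),
        matching_insert hM1 (hM2.1 hb) hi hbM1, matching_erase hM2 _, ?_, ?_, ?_, ?_, ?_, ?_⟩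
      · rw [matchWeight_insert (hi b), matchWeight_erase hb]; ring
      · intro j hj
        have hj' := Finset.mem_of_mem_erase hj
        have hjb : j = b := fst_unique hM2 hj' hb
        subst hjb
        exact (Finset.mem_erase.mp hj).1 rfl
      · exact fun j h i' h' => h i' (Finset.mem_of_mem_erase h')
      · intro i' hne h j hj
        rcases Finset.mem_insert.mp hj with heq | hj
        · exact hne (congrArg Prod.fst heq)
        · exact h j hj
      · intro j h1 h2 i' hj
        rcases Finset.mem_insert.mp hj with heq | hj
        · have : j = b := congrArg Prod.snd heq
          subst this
          exact h2 i hb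
        · exact h1 i' hj
      · exact fun i' _ _ h j hj => h j (Finset.mem_of_mem_erase hj)
    · -- b matched in M1 by (c,b) : peel both edges and recurse from c
      rw [expV] at hbM1; push_neg at hbM1
      obtain ⟨c, hc⟩ := hbM1
      have hci : c ≠ i := fun h => hi b (h ▸ hc)
      set A1 := M1.erase (c, b) with hA1def
      set A2 := M2.erase (i, b) with hA2def
      have hA1 : IsMatching E A1 := matching_erase hM1 _
      have hA2 : IsMatching E A2 := matching_erase hM2 _
      have hcard' : A2.card ≤ n := by
        rw [hA2def, Finset.card_erase_of_mem hb]; omega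
      have hcA1 : expU A1 c := by
        intro j hj
        have hj' := Finset.mem_of_mem_erase hj
        have hjb : j = b := fst_unique hM1 hj' hc
        subst hjb
        exact (Finset.mem_erase.mp hj).1 rfl
      obtain ⟨N1, N2, hN1, hN2, hw', r2, r3, r4, r5, r6⟩ := ih A1 A2 hcard' hA1 hA2 c hcA1
      have hiA1 : expU A1 i := fun j hj => hi j (Finset.mem_of_mem_erase hj)
      have hiA2 : expU A2 i := by
        intro j hj
        have hj' := Finset.mem_of_mem_erase hj
        have hjb : j = b := fst_unique hM2 hj' hb
        subst hjb
        exact (Finset.mem_erase.mp hj).1 rfl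
      have hbA1 : expV A1 b := by
        intro i' h'
        have h'' := Finset.mem_of_mem_erase h'
        have : i' = c := snd_unique hM1 h'' hc
        subst this
        exact (Finset.mem_erase.mp h').1 rfl
      have hbA2 : expV A2 b := by
        intro i' h'
        have h'' := Finset.mem_of_mem_erase h'
        have : i' = i := snd_unique hM2 h'' hb
        subst this
        exact (Finset.mem_erase.mp h').1 rfl
      have hiN1 : expU N1 i := r4 i (Ne.symm hci) hiA1
      have hbN1 : expV N1 b := r5 b hbA1 hbA2
      have hbN2 : expV N2 b := r3 b hbA2
      refine ⟨insert (i, b) N1, insert (c, b) N2,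
        matching_insert hN1 (hM2.1 hb) hiN1 hbN1,
        matching_insert hN2 (hM1.1 hc) r2 hbN2, ?_, ?_, ?_, ?_, ?_, ?_⟩
      · rw [matchWeight_insert (hiN1 b), matchWeight_insert (r2 b)]
        rw [hA1def, hA2def, matchWeight_erase hc, matchWeight_erase hb] at hw'
        linarith
      · -- i exposed in insert (c,b) N2
        intro j hj
        rcases Finset.mem_insert.mp hj with heq | hj
        · exact hci (congrArg Prod.fst heq).symm
        · exact r6 i (Ne.symm hci) hiA1 hiA2 j hj
      · -- V-exposed of M2 stay exposed in N2'
        intro j h i' hj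
        have hjb : j ≠ b := fun hh => h i (hh ▸ hb)
        rcases Finset.mem_insert.mp hj with heq | hj
        · exact hjb (congrArg Prod.snd heq)
        · exact r3 j (fun x hx => h x (Finset.mem_of_mem_erase hx)) i' hj
      · -- U-exposed of M1 (except i) stay exposed in N1'
        intro i' hne h j hj
        have hic : i' ≠ c := fun hh => h b (hh ▸ hc)
        rcases Finset.mem_insert.mp hj with heq | hj
        · exact hne (congrArg Prod.fst heq)
        · exact r4 i' hic (fun x hx => h x (Finset.mem_of_mem_erase hx)) j hj
      · -- V-exposed of both stay exposed in N1'
        intro j h1 h2 i' hj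
        have hjb : j ≠ b := fun hh => h1 c (hh ▸ hc)
        rcases Finset.mem_insert.mp hj with heq | hj
        · exact hjb (congrArg Prod.snd heq)
        · exact r5 j (fun x hx => h1 x (Finset.mem_of_mem_erase hx))
            (fun x hx => h2 x (Finset.mem_of_mem_erase hx)) i' hj
      · -- U-exposed of both (except i) stay exposed in N2'
        intro i' hne h1 h2 j hj
        have hic : i' ≠ c := fun hh => h1 b (hh ▸ hc)
        rcases Finset.mem_insert.mp hj with heq | hj
        · exact hic (congrArg Prod.fst heq)
        · exact r6 i' hic (fun x hx => h1 x (Finset.mem_of_mem_erase hx))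
            (fun x hx => h2 x (Finset.mem_of_mem_erase hx)) j hj

lemma no_two_exposed {E : Finset (U × V)} {w : U × V → ℚ} {i : U} {j : V}
    (hE : (i, j) ∈ E) (hw : 0 < w (i, j)) {M1 M2 : Finset (U × V)}
    (h1 : IsMaxMatching E w M1) (h2 : IsMaxMatching E w M2)
    (hi : expU M1 i) (hj : expV M2 j) : False := by
  obtain ⟨N1, N2, hN1, hN2, hsum, hiN2, hjpres, -, -, -⟩ :=
    swap_lemma E w M2.card M1 M2 le_rfl h1.1 h2.1 i hi
  have hle1 : matchWeight w N1 ≤ maxWeight E w := le_maxWeight hN1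
  have hle2 : matchWeight w N2 ≤ maxWeight E w := le_maxWeight hN2
  have hN2max : matchWeight w N2 = maxWeight E w := by
    rw [h1.2, h2.2] at hsum; linarith
  have hjN2 : expV N2 j := hjpres j hj
  have hins : IsMatching E (insert (i, j) N2) := matching_insert hN2 hE hiN2 hjN2
  have hle := le_maxWeight (w := w) hins
  rw [matchWeight_insert (hiN2 j)] at hle
  linarith

lemma essential_exists {E : Finset (U × V)} {w : U × V → ℚ} (h : 0 < maxWeight E w) :
    ∃ q, EssentialVertex E w q := by
  obtain ⟨M, hM⟩ := exists_maxMatching E w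
  have hpos : 0 < matchWeight w M := by rw [hM.2]; exact h
  obtain ⟨e0, he0M, he0w⟩ : ∃ e0 ∈ M, 0 < w e0 := by
    by_contra hcon
    push_neg at hcon
    have : matchWeight w M ≤ 0 := Finset.sum_nonpos hcon
    linarith
  obtain ⟨a, b⟩ := e0
  by_contra hcon
  push_neg at hcon
  have ha := hcon (Sum.inl a)
  have hb := hcon (Sum.inr b)
  simp only [EssentialVertex] at ha hb
  push_neg at ha hb
  obtain ⟨M1, hM1, hM1a⟩ := ha
  obtain ⟨M2, hM2, hM2b⟩ := hb
  simp only [MatchedIn, not_exists] at hM1a hM2b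
  exact no_two_exposed (hM.1.1 he0M) he0w hM1 hM2 hM1a hM2b

/-- Which side-vertex an edge touches. -/
def touches : U ⊕ V → U × V → Prop
  | Sum.inl a, e => e.1 = a
  | Sum.inr b, e => e.2 = b

lemma matchedIn_iff {M : Finset (U × V)} {q : U ⊕ V} :
    MatchedIn M q ↔ ∃ e ∈ M, touches q e := by
  cases q with
  | inl a =>
    simp only [MatchedIn, touches]
    constructor
    · rintro ⟨j, hj⟩; exact ⟨(a, j), hj, rfl⟩
    · rintro ⟨e, he, h1⟩
      exact ⟨e.2, by rwa [show (a, e.2) = e from Prod.ext_iff.mpr ⟨h1.symm, rfl⟩]⟩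
  | inr b =>
    simp only [MatchedIn, touches]
    constructor
    · rintro ⟨i, hi⟩; exact ⟨(i, b), hi, rfl⟩
    · rintro ⟨e, he, h1⟩
      exact ⟨e.1, by rwa [show (e.1, b) = e from Prod.ext_iff.mpr ⟨rfl, h1.symm⟩]⟩

lemma touch_unique {E M : Finset (U × V)} (hM : IsMatching E M) {q : U ⊕ V} {e e' : U × V}
    (he : e ∈ M) (he' : e' ∈ M) (h : touches q e) (h' : touches q e') : e = e' := by
  cases q with
  | inl a => exact hM.2.1 _ he _ he' ((h : e.1 = a).trans (h' : e'.1 = a).symm)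
  | inr b => exact hM.2.2 _ he _ he' ((h : e.2 = b).trans (h' : e'.2 = b).symm)

lemma matchWeight_sub_touch {E : Finset (U × V)} (w : U × V → ℚ) (δ : ℚ) {M : Finset (U × V)}
    {q : U ⊕ V} (hM : IsMatching E M) :
    matchWeight (fun e => w e - if touches q e then δ else 0) M
      = matchWeight w M - (if MatchedIn M q then δ else 0) := by
  simp only [matchWeight]
  rw [Finset.sum_sub_distrib]
  congr 1
  rw [← Finset.sum_filter]
  by_cases hm : MatchedIn M q
  · rw [if_pos hm]
    obtain ⟨e₀, he₀, ht₀⟩ := matchedIn_iff.mp hm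
    have hfil : M.filter (touches q) = {e₀} := by
      ext x
      simp only [Finset.mem_filter, Finset.mem_singleton]
      constructor
      · rintro ⟨hx, htx⟩; exact touch_unique hM hx he₀ htx ht₀
      · rintro rfl; exact ⟨he₀, ht₀⟩
    rw [hfil, Finset.sum_singleton]
  · rw [if_neg hm]
    have hfil : M.filter (touches q) = ∅ := by
      ext x
      simp only [Finset.mem_filter, Finset.notMem_empty, iff_false, not_and]
      intro hx htx
      exact hm (matchedIn_iff.mpr ⟨x, hx, htx⟩)
    rw [hfil, Finset.sum_empty]

lemma matchedIn_empty (q : U ⊕ V) : ¬ MatchedIn (∅ : Finset (U × V)) q := by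
  cases q <;> simp [MatchedIn]

lemma maxWeight_descend {E : Finset (U × V)} {w : U × V → ℚ} {q : U ⊕ V}
    (hq : EssentialVertex E w q) (hpos : 0 < maxWeight E w) :
    ∃ δ : ℚ, 0 < δ ∧
      maxWeight E (fun e => w e - if touches q e then δ else 0) = maxWeight E w - δ ∧
      (E.powerset.filter (fun M => IsMaxMatching E w M)) ⊂
        (E.powerset.filter (fun M =>
          IsMaxMatching E (fun e => w e - if touches q e then δ else 0) M)) := by
  classical
  set ν := maxWeight E w with hν
  set avoid := (E.powerset.filter (fun M => IsMatching E M)).filter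
    (fun M => ¬ MatchedIn M q) with havoid
  have havne : avoid.Nonempty := by
    refine ⟨∅, ?_⟩
    rw [havoid, Finset.mem_filter]
    exact ⟨mem_cands (matching_empty E), matchedIn_empty q⟩
  set ν₀ := avoid.sup' havne (matchWeight w) with hν₀
  obtain ⟨M₀, hM₀mem, hM₀eq⟩ := Finset.exists_mem_eq_sup' havne (matchWeight w)
  rw [havoid, Finset.mem_filter, Finset.mem_filter, Finset.mem_powerset] at hM₀mem
  have hM₀match : IsMatching E M₀ := hM₀mem.1.2
  have hM₀avoid : ¬ MatchedIn M₀ q := hM₀mem.2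
  have hν₀lt : ν₀ < ν := by
    rcases lt_or_eq_of_le (le_maxWeight (w := w) hM₀match) with h | h
    · rw [hν₀, hM₀eq]; exact h
    · exact absurd (hq M₀ ⟨hM₀match, h⟩) hM₀avoid
  set w' := fun e => w e - if touches q e then ν - ν₀ else 0 with hw'
  have hmw : maxWeight E w' = ν - (ν - ν₀) := by
    apply le_antisymm
    · apply maxWeight_le
      intro M hM
      rw [hw', matchWeight_sub_touch w (ν - ν₀) hM]
      by_cases hm : MatchedIn M q
      · rw [if_pos hm]
        have := le_maxWeight (w := w) hM
        linarith
      · rw [if_neg hm]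
        have hMav : M ∈ avoid := by
          rw [havoid, Finset.mem_filter]
          exact ⟨mem_cands hM, hm⟩
        have := Finset.le_sup' (matchWeight w) hMav
        rw [← hν₀] at this
        linarith
    · obtain ⟨M, hM⟩ := exists_maxMatching E w
      have hmatched : MatchedIn M q := hq M hM
      have := le_maxWeight (E := E) (w := w') hM.1
      rwa [hw', matchWeight_sub_touch w (ν - ν₀) hM.1, if_pos hmatched, hM.2] at this
  refine ⟨ν - ν₀, by linarith, by rw [← hw', hmw], ?_⟩
  rw [Finset.ssubset_iff_of_subset]
  · refine ⟨M₀, ?_, ?_⟩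
    · rw [Finset.mem_filter, Finset.mem_powerset]
      refine ⟨hM₀match.1, hM₀match, ?_⟩
      have h1 : matchWeight w' M₀ = ν₀ := by
        rw [hw', matchWeight_sub_touch w (ν - ν₀) hM₀match, if_neg hM₀avoid, ← hM₀eq, hν₀]
        ring
      show matchWeight w' M₀ = maxWeight E w'
      rw [h1, hmw]
      ring
    · rw [Finset.mem_filter]
      rintro ⟨-, -, habs⟩
      have hbad : ν₀ = ν := by rw [hν₀, hM₀eq]; exact habs
      exact absurd hbad (ne_of_lt hν₀lt)
  · intro M hM
    rw [Finset.mem_filter, Finset.mem_powerset] at hM ⊢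
    obtain ⟨hsub, hmatch, heq⟩ := hM
    refine ⟨hsub, hmatch, ?_⟩
    have hmatched : MatchedIn M q := hq M ⟨hmatch, heq⟩
    have h1 : matchWeight w' M = ν - (ν - ν₀) := by
      rw [hw', matchWeight_sub_touch w (ν - ν₀) hmatch, if_pos hmatched, heq]
    show matchWeight w' M = maxWeight E w'
    rw [h1, hmw]

lemma touches_inl (a : U) (x : U × V) : touches (Sum.inl a) x ↔ x.1 = a := Iff.rfl
lemma touches_inr (b : V) (x : U × V) : touches (Sum.inr b) x ↔ x.2 = b := Iff.rfl

section WithFintype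

variable [Fintype U] [Fintype V]

lemma core_of_zero (E : Finset (U × V)) (w : U × V → ℚ) (h : maxWeight E w = 0) :
    ∃ u v, InCore E w u v := by
  refine ⟨0, 0, fun i => le_refl 0, fun j => le_refl 0, ?_, ?_⟩
  · intro x hx
    have := edge_le_maxWeight (w := w) hx
    simp only [Pi.zero_apply]
    linarith
  · simp [h]

lemma egervary (E : Finset (U × V)) :
    ∀ n : ℕ, ∀ w : U × V → ℚ,
      (E.powerset.filter (fun M => IsMatching E M)).card
        - (E.powerset.filter (fun M => IsMaxMatching E w M)).card ≤ n →
      ∃ u v, InCore E w u v := by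
  intro n
  induction n with
  | zero =>
    intro w hn
    have hsub : (E.powerset.filter (fun M => IsMaxMatching E w M)) ⊆
        E.powerset.filter (fun M => IsMatching E M) := by
      intro M hM
      rw [Finset.mem_filter] at hM ⊢
      exact ⟨hM.1, hM.2.1⟩
    have hle : (E.powerset.filter (fun M => IsMatching E M)).card ≤
        (E.powerset.filter (fun M => IsMaxMatching E w M)).card := by omega
    have heq := Finset.eq_of_subset_of_card_le hsub hle
    have hmem : (∅ : Finset (U × V)) ∈ E.powerset.filter (fun M => IsMaxMatching E w M) := by
      rw [heq]
      exact mem_cands (matching_empty E)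
    rw [Finset.mem_filter] at hmem
    have h0 : maxWeight E w = 0 := by
      have := hmem.2.2
      simpa [matchWeight] using this.symm
    exact core_of_zero E w h0
  | succ n ih =>
    intro w hn
    by_cases h0 : maxWeight E w = 0
    · exact core_of_zero E w h0
    have hpos : 0 < maxWeight E w := lt_of_le_of_ne (maxWeight_nonneg E w) (Ne.symm h0)
    obtain ⟨q, hq⟩ := essential_exists hpos
    obtain ⟨δ, hδ, hmw, hss⟩ := maxWeight_descend hq hpos
    set w' := fun x => w x - if touches q x then δ else 0 with hw'
    have hcard : (E.powerset.filter (fun M => IsMatching E M)).card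
        - (E.powerset.filter (fun M => IsMaxMatching E w' M)).card ≤ n := by
      have h1 := Finset.card_lt_card hss
      have h2 : (E.powerset.filter (fun M => IsMaxMatching E w' M)) ⊆
          E.powerset.filter (fun M => IsMatching E M) := by
        intro M hM
        rw [Finset.mem_filter] at hM ⊢
        exact ⟨hM.1, hM.2.1⟩
      have h3 := Finset.card_le_card h2
      omega
    obtain ⟨u', v', hu', hv', hcov', htot'⟩ := ih w' hcard
    cases q with
    | inl a =>
      refine ⟨fun i => u' i + if i = a then δ else 0, v', ?_, hv', ?_, ?_⟩
      · intro i
        by_cases h : i = a <;> simp [h]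
        · linarith [hu' a]
        · exact hu' i
      · intro x hx
        have hcov := hcov' x hx
        by_cases h : x.1 = a
        · have hx' : w' x = w x - δ := by simp [hw', touches_inl, h]
          rw [hx'] at hcov
          simp only [if_pos h]
          linarith
        · have hx' : w' x = w x := by simp [hw', touches_inl, h]
          rw [hx'] at hcov
          simp only [if_neg h]
          linarith
      · have hsum : (∑ i, (u' i + if i = a then δ else 0)) = (∑ i, u' i) + δ := by
          rw [Finset.sum_add_distrib]
          congr 1
          simp
        rw [hsum, hmw] at *
        linarith
    | inr b =>
      refine ⟨u', fun j => v' j + if j = b then δ else 0, hu', ?_, ?_, ?_⟩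
      · intro j
        by_cases h : j = b <;> simp [h]
        · linarith [hv' b]
        · exact hv' j
      · intro x hx
        have hcov := hcov' x hx
        by_cases h : x.2 = b
        · have hx' : w' x = w x - δ := by simp [hw', touches_inr, h]
          rw [hx'] at hcov
          simp only [if_pos h]
          linarith
        · have hx' : w' x = w x := by simp [hw', touches_inr, h]
          rw [hx'] at hcov
          simp only [if_neg h]
          linarith
      · have hsum : (∑ j, (v' j + if j = b then δ else 0)) = (∑ j, v' j) + δ := by
          rw [Finset.sum_add_distrib]
          congr 1
          simp
        rw [hsum, hmw] at *
        linarith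

end WithFintype

end Subpar

/-- Every subpar edge (an edge in no maximum weight matching) is strictly
over-tight under some core imputation. -/
theorem subpar_overtight_sometimes {U V : Type*} [Fintype U] [Fintype V]
    [DecidableEq U] [DecidableEq V]
    (E : Finset (U × V)) (w : U × V → ℚ) (hw : ∀ e ∈ E, 0 < w e)
    (e : U × V) (he : e ∈ E)
    (hsub : ∀ M, IsMaxMatching E w M → e ∉ M) :
    ∃ (u : U → ℚ) (v : V → ℚ), InCore E w u v ∧ w e < u e.1 + v e.2 := by
  classical
  set contain := (E.powerset.filter (fun M => IsMatching E M)).filter (fun M => e ∈ M)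
    with hcontain
  have hcne : contain.Nonempty := by
    refine ⟨{e}, ?_⟩
    rw [hcontain, Finset.mem_filter]
    exact ⟨Subpar.mem_cands (Subpar.matching_single he), Finset.mem_singleton_self e⟩
  obtain ⟨M₁, hM₁mem, hM₁eq⟩ := Finset.exists_mem_eq_sup' hcne (matchWeight w)
  rw [hcontain, Finset.mem_filter, Finset.mem_filter] at hM₁mem
  have hM₁match : IsMatching E M₁ := hM₁mem.1.2
  have hM₁e : e ∈ M₁ := hM₁mem.2
  set ν₁ := contain.sup' hcne (matchWeight w) with hν₁
  have hlt : ν₁ < maxWeight E w := by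
    rcases lt_or_eq_of_le (Subpar.le_maxWeight (w := w) hM₁match) with h | h
    · rw [hM₁eq]; exact h
    · exact absurd hM₁e (hsub M₁ ⟨hM₁match, h⟩)
  set γ := maxWeight E w - ν₁ with hγdef
  have hγ : 0 < γ := by rw [hγdef]; linarith
  set w₂ := fun x => w x + if x = e then γ else 0 with hw₂
  have hmwM : ∀ M : Finset (U × V), matchWeight w₂ M
      = matchWeight w M + (if e ∈ M then γ else 0) := by
    intro M
    simp only [matchWeight, hw₂]
    rw [Finset.sum_add_distrib]
    congr 1
    rw [Finset.sum_ite_eq' M e (fun _ => γ)]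
  have hmax₂ : maxWeight E w₂ = maxWeight E w := by
    apply le_antisymm
    · apply Subpar.maxWeight_le
      intro M hM
      rw [hmwM]
      by_cases hm : e ∈ M
      · rw [if_pos hm]
        have hMc : M ∈ contain := by
          rw [hcontain, Finset.mem_filter]
          exact ⟨Subpar.mem_cands hM, hm⟩
        have := Finset.le_sup' (matchWeight w) hMc
        rw [← hν₁] at this
        linarith
      · rw [if_neg hm]
        have := Subpar.le_maxWeight (w := w) hM
        linarith
    · obtain ⟨M, hM⟩ := Subpar.exists_maxMatching E w
      have heM : e ∉ M := hsub M hM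
      have := Subpar.le_maxWeight (w := w₂) hM.1
      rw [hmwM, if_neg heM, add_zero, hM.2] at this
      exact this
  obtain ⟨u, v, hu, hv, hcov, htot⟩ :=
    Subpar.egervary E (E.powerset.filter (fun M => IsMatching E M)).card w₂ (Nat.sub_le _ _)
  refine ⟨u, v, ⟨hu, hv, ?_, ?_⟩, ?_⟩
  · intro x hx
    have h := hcov x hx
    have hle : w x ≤ w₂ x := by
      rw [hw₂]
      by_cases hxe : x = e <;> simp [hxe]
      linarith
    linarith
  · rw [htot, hmax₂]
  · have h := hcov e he
    have heq : w₂ e = w e + γ := by simp [hw₂]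
    linarith
end

section
/- The leximax core imputation of the assignment game is unique: there is at most one core imputation whose sorted (decreasing) vector of profits of essential vertices is lexicographically minimal among all core imputations. -/
/-!
Two leximax imputations have the same decreasing profit list, hence the same multiset of
profits on essential vertices. If they differed at some essential vertex, their midpoint, which
lies in the convex core, would have a lexicographically smaller list: strip the largest profits
that both imputations pay at the same vertex; the next largest value `t` is then attained by
the midpoint strictly fewer times, as the midpoint equals `t` only where both imputations do.
On an inessential vertex every core imputation pays `0`, since some maximum matching leaves it
unmatched while the core payoffs sum to exactly the weight of that matching.
-/

open scoped Classical

/-- Profits of the essential vertices, sorted in increasing order. -/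
noncomputable def profitListInc {U V : Type*} [Fintype U] [Fintype V]
    [DecidableEq U] [DecidableEq V]
    (E : Finset (U × V)) (w : U × V → ℚ) (u : U → ℚ) (v : V → ℚ) : List ℚ :=
  ((Finset.univ.filter (fun q : U ⊕ V => EssentialVertex E w q)).val.map
    (Sum.elim u v)).sort (· ≤ ·)

/-- Profits of the essential vertices, sorted in decreasing order. -/
noncomputable def profitListDec {U V : Type*} [Fintype U] [Fintype V]
    [DecidableEq U] [DecidableEq V]
    (E : Finset (U × V)) (w : U × V → ℚ) (u : U → ℚ) (v : V → ℚ) : List ℚ :=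
  (profitListInc E w u v).reverse

/-- `(u, v)` is the leximin core imputation: its increasing sorted list of
profits of essential vertices is lexicographically largest over the core. -/
def IsLeximin {U V : Type*} [Fintype U] [Fintype V] [DecidableEq U] [DecidableEq V]
    (E : Finset (U × V)) (w : U × V → ℚ) (u : U → ℚ) (v : V → ℚ) : Prop :=
  InCore E w u v ∧ ∀ u' v', InCore E w u' v' →
    profitListInc E w u' v' = profitListInc E w u v ∨
      List.Lex (· < ·) (profitListInc E w u' v') (profitListInc E w u v)

/-- `(u, v)` is the leximax core imputation: its decreasing sorted list of
profits of essential vertices is lexicographically smallest over the core. -/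
def IsLeximax {U V : Type*} [Fintype U] [Fintype V] [DecidableEq U] [DecidableEq V]
    (E : Finset (U × V)) (w : U × V → ℚ) (u : U → ℚ) (v : V → ℚ) : Prop :=
  InCore E w u v ∧ ∀ u' v', InCore E w u' v' →
    profitListDec E w u v = profitListDec E w u' v' ∨
      List.Lex (· < ·) (profitListDec E w u v) (profitListDec E w u' v')

namespace Multiset

section LinearOrder

variable {α : Type*} [LinearOrder α]

theorem reverse_sort_le (s : Multiset α) : (s.sort (· ≤ ·)).reverse = s.sort (· ≥ ·) := by
  refine List.Perm.eq_of_pairwise' (r := (· ≥ ·)) ?_ (s.pairwise_sort _) ?_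
  · exact List.pairwise_reverse.2 (s.pairwise_sort _)
  · rw [← coe_eq_coe, coe_reverse, sort_eq, sort_eq]

theorem lex_sort_ge_of_forall_lt_of_mem {s t : Multiset α} {a : α} (hs : s ≠ 0)
    (hlt : ∀ x ∈ s, x < a) (ha : a ∈ t) :
    List.Lex (· < ·) (s.sort (· ≥ ·)) (t.sort (· ≥ ·)) := by
  obtain ⟨x, xs, hx⟩ : ∃ x xs, s.sort (· ≥ ·) = x :: xs :=
    List.ne_nil_iff_exists_cons.1 fun h => hs (by rw [← sort_eq s (· ≥ ·), h, coe_nil])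
  obtain ⟨y, ys, hy⟩ : ∃ y ys, t.sort (· ≥ ·) = y :: ys :=
    List.ne_nil_iff_exists_cons.1 (List.ne_nil_of_mem ((mem_sort (· ≥ ·)).2 ha))
  have hx_mem : x ∈ s := (mem_sort (· ≥ ·)).1 (hx ▸ List.mem_cons_self)
  have hay : a ≤ y := by
    rcases List.mem_cons.1 (hy ▸ (mem_sort (· ≥ ·)).2 ha) with rfl | ha_ys
    · exact le_rfl
    · exact List.rel_of_pairwise_cons (R := (· ≥ ·)) (hy ▸ t.pairwise_sort _) ha_ys
  rw [hx, hy]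
  exact List.Lex.rel ((hlt x hx_mem).trans_le hay)

end LinearOrder

variable {ι α : Type*} [Field α] [LinearOrder α] [IsStrictOrderedRing α]

theorem lex_sort_ge_map_midpoint (s : Multiset ι) {a b : ι → α} (hab : s.map a = s.map b)
    (hne : ∃ i ∈ s, a i ≠ b i) :
    List.Lex (· < ·) ((s.map fun i => (a i + b i) / 2).sort (· ≥ ·)) ((s.map a).sort (· ≥ ·)) := by
  induction s using Multiset.strongInductionOn with
  | ih s ih =>
  obtain ⟨i, hi, hne⟩ := hne
  have hs0 : s ≠ 0 := by rintro rfl; exact notMem_zero i hi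
  obtain ⟨j, hj, ha_le⟩ := exists_max_image a hs0
  have hb_le : ∀ k ∈ s, b k ≤ a j := by
    intro k hk
    obtain ⟨k', hk', hak'⟩ := mem_map.1 (hab ▸ mem_map_of_mem b hk)
    exact hak' ▸ ha_le k' hk'
  by_cases htop : ∃ k ∈ s, a k = a j ∧ b k = a j
  · obtain ⟨k, hk, hak, hbk⟩ := htop
    have hs : s = k ::ₘ s.erase k := (cons_erase hk).symm
    have hab' : (s.erase k).map a = (s.erase k).map b := by
      rw [hs, map_cons, map_cons, hak, hbk] at hab
      exact (cons_inj_right _).1 hab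
    have hik : i ≠ k := by rintro rfl; exact hne (hak.trans hbk.symm)
    have hlex := ih _ (erase_lt.2 hk) hab' ⟨i, (mem_erase_of_ne hik).2 hi, hne⟩
    rw [hs, map_cons, map_cons, sort_cons, sort_cons]
    · rw [show (a k + b k) / 2 = a k by rw [hbk, ← hak]; ring]
      exact List.Lex.cons hlex
    · simp only [mem_map, forall_exists_index, and_imp, forall_apply_eq_imp_iff₂]
      exact fun l hl => hak ▸ ha_le l (mem_of_mem_erase hl)
    · simp only [mem_map, forall_exists_index, and_imp, forall_apply_eq_imp_iff₂]
      intro l hl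
      rw [hak, hbk]
      linarith [ha_le l (mem_of_mem_erase hl), hb_le l (mem_of_mem_erase hl)]
  · push Not at htop
    refine lex_sort_ge_of_forall_lt_of_mem (map_eq_zero.not.2 hs0) ?_
      (mem_map_of_mem a hj)
    simp only [mem_map, forall_exists_index, and_imp, forall_apply_eq_imp_iff₂]
    intro k hk
    rcases (ha_le k hk).lt_or_eq with hlt | heq
    · linarith [hb_le k hk]
    · linarith [(hb_le k hk).lt_of_ne (htop k hk heq)]

end Multiset

section AssignmentGame

variable {U V : Type*} [Fintype U] [Fintype V] [DecidableEq U] [DecidableEq V]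
  {E : Finset (U × V)} {w : U × V → ℚ} {u u' : U → ℚ} {v v' : V → ℚ}

theorem convex_inCore : Convex ℚ {p : (U → ℚ) × (V → ℚ) | InCore E w p.1 p.2} := by
  rintro p ⟨hp₁, hp₂, hp_edge, hp_sum⟩ p' ⟨hp₁', hp₂', hp_edge', hp_sum'⟩ a b ha hb hab
  refine ⟨fun i => ?_, fun j => ?_, fun e he => ?_, ?_⟩
  · simp only [Prod.fst_add, Prod.smul_fst, Pi.add_apply, Pi.smul_apply, smul_eq_mul]
    have := hp₁ i; have := hp₁' i; positivity
  · simp only [Prod.snd_add, Prod.smul_snd, Pi.add_apply, Pi.smul_apply, smul_eq_mul]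
    have := hp₂ j; have := hp₂' j; positivity
  · simp only [Prod.fst_add, Prod.snd_add, Prod.smul_fst, Prod.smul_snd, Pi.add_apply,
      Pi.smul_apply, smul_eq_mul]
    have hw : w e = a * w e + b * w e := by rw [← add_mul, hab, one_mul]
    linarith [mul_le_mul_of_nonneg_left (hp_edge e he) ha,
      mul_le_mul_of_nonneg_left (hp_edge' e he) hb]
  · simp only [Prod.fst_add, Prod.snd_add, Prod.smul_fst, Prod.smul_snd, Pi.add_apply,
      Pi.smul_apply, smul_eq_mul, Finset.sum_add_distrib, ← Finset.mul_sum]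
    linear_combination a * hp_sum + b * hp_sum' + maxWeight E w * hab

theorem InCore.midpoint (h : InCore E w u v) (h' : InCore E w u' v') :
    InCore E w (fun i => (u i + u' i) / 2) (fun j => (v j + v' j) / 2) := by
  have hm : InCore E w ((2⁻¹ : ℚ) • (u, v) + (2⁻¹ : ℚ) • (u', v')).1
      ((2⁻¹ : ℚ) • (u, v) + (2⁻¹ : ℚ) • (u', v')).2 :=
    convex_inCore h h' (by norm_num) (by norm_num) (by norm_num)
  convert hm using 1 <;> funext <;> simp only [Prod.fst_add, Prod.snd_add, Prod.smul_fst,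
    Prod.smul_snd, Pi.add_apply, Pi.smul_apply, smul_eq_mul] <;> ring

theorem InCore.sum_add_sum_le_of_isMaxMatching (h : InCore E w u v) {M : Finset (U × V)}
    (hM : IsMaxMatching E w M) :
    ∑ i, u i + ∑ j, v j ≤ ∑ i ∈ M.image Prod.fst, u i + ∑ j ∈ M.image Prod.snd, v j := by
  obtain ⟨⟨hME, hinj₁, hinj₂⟩, hMw⟩ := hM
  calc ∑ i, u i + ∑ j, v j = ∑ e ∈ M, w e := h.2.2.2.trans hMw.symm
    _ ≤ ∑ e ∈ M, (u e.1 + v e.2) := Finset.sum_le_sum fun e he => h.2.2.1 e (hME he)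
    _ = _ := by
      rw [Finset.sum_add_distrib, Finset.sum_image hinj₁, Finset.sum_image hinj₂]

theorem InCore.eq_zero_of_not_matchedIn (h : InCore E w u v) {M : Finset (U × V)}
    (hM : IsMaxMatching E w M) {q : U ⊕ V} (hq : ¬ MatchedIn M q) : Sum.elim u v q = 0 := by
  have hle := h.sum_add_sum_le_of_isMaxMatching hM
  cases q with
  | inl i =>
    have hi : i ∉ M.image Prod.fst := by simpa [MatchedIn] using hq
    have hU := Finset.sum_le_univ_sum_of_nonneg (s := insert i (M.image Prod.fst)) h.1
    have hV := Finset.sum_le_univ_sum_of_nonneg (s := M.image Prod.snd) h.2.1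
    rw [Finset.sum_insert hi] at hU
    exact le_antisymm (by simp only [Sum.elim_inl]; linarith) (h.1 i)
  | inr j =>
    have hj : j ∉ M.image Prod.snd := by simpa [MatchedIn] using hq
    have hU := Finset.sum_le_univ_sum_of_nonneg (s := M.image Prod.fst) h.1
    have hV := Finset.sum_le_univ_sum_of_nonneg (s := insert j (M.image Prod.snd)) h.2.1
    rw [Finset.sum_insert hj] at hV
    exact le_antisymm (by simp only [Sum.elim_inr]; linarith) (h.2.1 j)

theorem InCore.eq_zero_of_not_essentialVertex (h : InCore E w u v) {q : U ⊕ V}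
    (hq : ¬ EssentialVertex E w q) : Sum.elim u v q = 0 := by
  obtain ⟨M, hM, hMq⟩ : ∃ M, IsMaxMatching E w M ∧ ¬ MatchedIn M q := by
    simpa [EssentialVertex] using hq
  exact h.eq_zero_of_not_matchedIn hM hMq

theorem profitListDec_eq_sort (u : U → ℚ) (v : V → ℚ) :
    profitListDec E w u v =
      ((Finset.univ.filter fun q => EssentialVertex E w q).val.map (Sum.elim u v)).sort (· ≥ ·) :=
  Multiset.reverse_sort_le _

theorem IsLeximax.not_lex_lt (h : IsLeximax E w u v) (h' : InCore E w u' v') :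
    ¬ List.Lex (· < ·) (profitListDec E w u' v') (profitListDec E w u v) := fun hlt =>
  (h.2 u' v' h').elim (fun he => irrefl _ (he ▸ hlt)) (asymm hlt)

theorem IsLeximax.profitListDec_eq (h : IsLeximax E w u v) (h' : IsLeximax E w u' v') :
    profitListDec E w u v = profitListDec E w u' v' :=
  (h.2 u' v' h'.1).resolve_right (h'.not_lex_lt h.1)

end AssignmentGame

/-- The leximax core imputation is unique. -/
theorem leximax_unique {U V : Type*} [Fintype U] [Fintype V]
    [DecidableEq U] [DecidableEq V]
    (E : Finset (U × V)) (w : U × V → ℚ)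
    (u : U → ℚ) (v : V → ℚ) (u' : U → ℚ) (v' : V → ℚ)
    (h : IsLeximax E w u v) (h' : IsLeximax E w u' v') :
    u = u' ∧ v = v' := by
  set S := Finset.univ.filter fun q : U ⊕ V => EssentialVertex E w q
  have hprofits : S.val.map (Sum.elim u v) = S.val.map (Sum.elim u' v') := by
    simpa only [profitListDec_eq_sort, Multiset.sort_eq] using
      congrArg ((↑) : List ℚ → Multiset ℚ) (h.profitListDec_eq h')
  have hessential : ∀ q ∈ S, Sum.elim u v q = Sum.elim u' v' q := by
    by_contra! hne
    refine h.not_lex_lt (h.1.midpoint h'.1) ?_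
    have hmid : Sum.elim (fun i => (u i + u' i) / 2) (fun j => (v j + v' j) / 2) =
        fun q => (Sum.elim u v q + Sum.elim u' v' q) / 2 := by
      funext q; cases q <;> rfl
    rw [profitListDec_eq_sort, profitListDec_eq_sort, hmid]
    exact Multiset.lex_sort_ge_map_midpoint S.val hprofits hne
  have hall : ∀ q, Sum.elim u v q = Sum.elim u' v' q := fun q => by
    by_cases hq : EssentialVertex E w q
    · exact hessential q (Finset.mem_filter.2 ⟨Finset.mem_univ q, hq⟩)
    · rw [h.1.eq_zero_of_not_essentialVertex hq, h'.1.eq_zero_of_not_essentialVertex hq]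
  exact ⟨funext fun i => hall (.inl i), funext fun j => hall (.inr j)⟩
end

section
/- If an essential edge (i,j) of the assignment game has the property that i has no other incident edges, then for any core imputation with u_i = a > 0 and v_j = b, the allocation obtained by setting u_i = 0 and v_j = a + b (and all else unchanged) is also a core imputation. In particular, such an essential edge does not have a unique imputation on its endpoints. -/
open scoped Classical

/-- If `(i, j)` is an essential edge and `i` has no other incident edge, then
transferring all of `i`'s profit to `j` yields another core imputation; in
particular the imputation on the endpoints of such an edge is not unique. -/
theorem essential_edge_transfer {U V : Type*} [Fintype U] [Fintype V]
    [DecidableEq U] [DecidableEq V]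
    (E : Finset (U × V)) (w : U × V → ℚ) (hw : ∀ e ∈ E, 0 < w e)
    (i : U) (j : V) (he : (i, j) ∈ E)
    (hess : ∀ M, IsMaxMatching E w M → (i, j) ∈ M)
    (honly : ∀ j', (i, j') ∈ E → j' = j)
    (u : U → ℚ) (v : V → ℚ) (h : InCore E w u v) (hpos : 0 < u i) :
    InCore E w (Function.update u i 0) (Function.update v j (u i + v j)) ∧
      Function.update u i 0 ≠ u := by
  obtain ⟨hu, hv, hedge, hsum⟩ := h
  refine ⟨⟨?_, ?_, ?_, ?_⟩, ?_⟩
  · intro i'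
    rcases eq_or_ne i' i with rfl | hne
    · simp
    · simp [Function.update_apply, hne, hu i']
  · intro j'
    rcases eq_or_ne j' j with rfl | hne
    · simp [Function.update_apply]
      linarith [hu i, hv j']
    · simp [Function.update_apply, hne, hv j']
  · intro e heE
    rcases eq_or_ne e.1 i with h1 | h1
    · have hj : e.2 = j := honly e.2 (by rw [← h1]; exact heE)
      rw [h1, hj, Function.update_self, Function.update_self]
      have := hedge e heE
      rw [h1, hj] at this
      linarith
    · rw [Function.update_of_ne h1]
      rcases eq_or_ne e.2 j with h2 | h2
      · rw [h2, Function.update_self]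
        have := hedge e heE
        rw [h2] at this
        linarith [hu i]
      · rw [Function.update_of_ne h2]
        exact hedge e heE
  · rw [Finset.sum_update_of_mem (Finset.mem_univ i),
      Finset.sum_update_of_mem (Finset.mem_univ j)]
    have h1 : ∑ x ∈ Finset.univ \ {i}, u x = (∑ x, u x) - u i := by
      rw [Finset.sum_sdiff_eq_sub (by simp)]; simp
    have h2 : ∑ x ∈ Finset.univ \ {j}, v x = (∑ x, v x) - v j := by
      rw [Finset.sum_sdiff_eq_sub (by simp)]; simp
    rw [h1, h2]
    linarith
  · intro hcontra
    have := congrFun hcontra i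
    simp at this
    linarith
end

section
/- In the assignment game, every essential edge (i,j) considered as a connected component of the tight subgraph admits more than one core imputation restricted to its endpoints; i.e., there exist two core imputations that differ on {i, j}. -/
open scoped Classical

section Basic
variable {U V : Type*} [DecidableEq U] [DecidableEq V]

lemma matchWeight_le_maxWeight (E : Finset (U × V)) (w : U × V → ℚ)
    {M : Finset (U × V)} (hM : IsMatching E M) :
    matchWeight w M ≤ maxWeight E w := by
  apply Finset.le_sup'
  simp [Finset.mem_filter, Finset.mem_powerset, hM, hM.1]

lemma exists_max_matching (E : Finset (U × V)) (w : U × V → ℚ) :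
    ∃ M, IsMatching E M ∧ matchWeight w M = maxWeight E w := by
  obtain ⟨M, hM, hMw⟩ := Finset.exists_mem_eq_sup'
    (⟨∅, by simp [IsMatching]⟩ : ((E.powerset).filter (fun M => IsMatching E M)).Nonempty)
    (matchWeight w)
  exact ⟨M, (Finset.mem_filter.mp hM).2, hMw.symm⟩

lemma maxWeight_le (E : Finset (U × V)) (w : U × V → ℚ) {c : ℚ}
    (h : ∀ M, IsMatching E M → matchWeight w M ≤ c) : maxWeight E w ≤ c := by
  apply Finset.sup'_le
  intro M hM
  exact h M (Finset.mem_filter.mp hM).2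

end Basic

section Dual
variable {U V : Type*} [Fintype U] [Fintype V] [DecidableEq U] [DecidableEq V]

/-- feasible dual -/
def Dual (E : Finset (U × V)) (w : U × V → ℚ) (u : U → ℚ) (v : V → ℚ) : Prop :=
  (∀ i, 0 ≤ u i) ∧ (∀ j, 0 ≤ v j) ∧ ∀ e ∈ E, w e ≤ u e.1 + v e.2

lemma sum_fst_le {M : Finset (U × V)} (u : U → ℚ) (hu : ∀ i, 0 ≤ u i)
    (hM : ∀ e ∈ M, ∀ e' ∈ M, e.1 = e'.1 → e = e') :
    ∑ e ∈ M, u e.1 ≤ ∑ i, u i := by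
  have h1 : ∑ i ∈ M.image Prod.fst, u i = ∑ e ∈ M, u e.1 :=
    Finset.sum_image (fun e he e' he' h => hM e he e' he' h)
  rw [← h1]
  exact Finset.sum_le_sum_of_subset_of_nonneg (Finset.subset_univ _)
    (fun i _ _ => hu i)

lemma sum_snd_le {M : Finset (U × V)} (v : V → ℚ) (hv : ∀ j, 0 ≤ v j)
    (hM : ∀ e ∈ M, ∀ e' ∈ M, e.2 = e'.2 → e = e') :
    ∑ e ∈ M, v e.2 ≤ ∑ j, v j := by
  have h1 : ∑ j ∈ M.image Prod.snd, v j = ∑ e ∈ M, v e.2 :=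
    Finset.sum_image (fun e he e' he' h => hM e he e' he' h)
  rw [← h1]
  exact Finset.sum_le_sum_of_subset_of_nonneg (Finset.subset_univ _)
    (fun i _ _ => hv i)

/-- weak duality -/
lemma weak_duality (E : Finset (U × V)) (w : U × V → ℚ) {u v}
    (hd : Dual E w u v) {M : Finset (U × V)} (hM : IsMatching E M) :
    matchWeight w M ≤ (∑ i, u i) + (∑ j, v j) := by
  obtain ⟨hu, hv, hc⟩ := hd
  calc matchWeight w M ≤ ∑ e ∈ M, (u e.1 + v e.2) :=
        Finset.sum_le_sum (fun e he => hc e (hM.1 he))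
    _ = (∑ e ∈ M, u e.1) + ∑ e ∈ M, v e.2 := Finset.sum_add_distrib
    _ ≤ _ := add_le_add (sum_fst_le u hu hM.2.1) (sum_snd_le v hv hM.2.2)

end Dual

/-- q is an integer -/
def Zq (q : ℚ) : Prop := ∃ n : ℤ, q = n

lemma Zq.add {a b : ℚ} (ha : Zq a) (hb : Zq b) : Zq (a + b) := by
  obtain ⟨m, rfl⟩ := ha; obtain ⟨n, rfl⟩ := hb; exact ⟨m + n, by push_cast; ring⟩
lemma Zq.sub {a b : ℚ} (ha : Zq a) (hb : Zq b) : Zq (a - b) := by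
  obtain ⟨m, rfl⟩ := ha; obtain ⟨n, rfl⟩ := hb; exact ⟨m - n, by push_cast; ring⟩
lemma Zq.zero : Zq 0 := ⟨0, by norm_num⟩
lemma Zq.one : Zq 1 := ⟨1, by norm_num⟩
lemma Zq.max {a b : ℚ} (ha : Zq a) (hb : Zq b) : Zq (max a b) := by
  rcases le_total a b with h | h
  · rwa [max_eq_right h]
  · rwa [max_eq_left h]
lemma Zq.sum {α : Type*} {s : Finset α} {f : α → ℚ} (h : ∀ x ∈ s, Zq (f x)) :
    Zq (∑ x ∈ s, f x) := by
  classical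
  induction s using Finset.induction with
  | empty => simpa using Zq.zero
  | insert _ _ hx ih =>
    rw [Finset.sum_insert hx]
    exact Zq.add (h _ (Finset.mem_insert_self _ _))
      (ih fun x hxs => h x (Finset.mem_insert_of_mem hxs))

/-- gap lemma: strict inequality between integers gives gap 1 -/
lemma Zq.add_one_le {a b : ℚ} (ha : Zq a) (hb : Zq b) (h : a < b) : a + 1 ≤ b := by
  obtain ⟨m, rfl⟩ := ha; obtain ⟨n, rfl⟩ := hb
  have : m < n := by exact_mod_cast h
  have : m + 1 ≤ n := this
  calc (m:ℚ) + 1 = ((m+1 : ℤ) : ℚ) := by push_cast; ring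
    _ ≤ n := by exact_mod_cast this

/-- a nonneg integer rational maps to ℕ faithfully -/
lemma Zq.exists_nat {a : ℚ} (ha : Zq a) (h0 : 0 ≤ a) : ∃ n : ℕ, a = n := by
  obtain ⟨m, rfl⟩ := ha
  have : 0 ≤ m := by exact_mod_cast h0
  exact ⟨m.toNat, by exact_mod_cast (congrArg (Int.cast : ℤ → ℚ) (Int.toNat_of_nonneg this)).symm⟩

/-- Mendelsohn–Dulmage: from a matching covering certain left vertices and a
matching covering certain right vertices, build one matching covering both. -/
lemma mendelsohn_dulmage {U V : Type*} [DecidableEq U] [DecidableEq V] (n : ℕ) :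
    ∀ (M1 M2 : Finset (U × V)), (M2 \ M1).card = n →
    (∀ e ∈ M1, ∀ e' ∈ M1, e.1 = e'.1 → e = e') →
    (∀ e ∈ M1, ∀ e' ∈ M1, e.2 = e'.2 → e = e') →
    (∀ e ∈ M2, ∀ e' ∈ M2, e.1 = e'.1 → e = e') →
    (∀ e ∈ M2, ∀ e' ∈ M2, e.2 = e'.2 → e = e') →
    ∃ M, M ⊆ M1 ∪ M2 ∧
      (∀ e ∈ M, ∀ e' ∈ M, e.1 = e'.1 → e = e') ∧
      (∀ e ∈ M, ∀ e' ∈ M, e.2 = e'.2 → e = e') ∧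
      (∀ p ∈ M1, ∃ q ∈ M, q.1 = p.1) ∧ (∀ p ∈ M2, ∃ q ∈ M, q.2 = p.2) := by
  induction n using Nat.strong_induction_on with
  | _ n ih =>
    intro M1 M2 hcard h11 h12 h21 h22
    by_cases hc : ∀ e ∈ M2, ∃ e' ∈ M1, e'.2 = e.2
    · exact ⟨M1, Finset.subset_union_left, h11, h12,
        fun p hp => ⟨p, hp, rfl⟩, hc⟩
    · push_neg at hc
      obtain ⟨e, heM2, hb⟩ := hc
      have heM1 : e ∉ M1 := fun h => hb e h rfl
      have hediff : e ∈ M2 \ M1 := Finset.mem_sdiff.mpr ⟨heM2, heM1⟩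
      have hn1 : 1 ≤ n := by
        rw [← hcard]; exact Finset.card_pos.mpr ⟨e, hediff⟩ 
      by_cases ha : ∃ e' ∈ M1, e'.1 = e.1
      · -- swap case
        obtain ⟨e', he'M1, ha'⟩ := ha
        have hee' : e' ≠ e := fun h => hb e' he'M1 (by rw [h])
        have he'M2 : e' ∉ M2 := fun h => hee' (h21 e' h e heM2 ha')
        set M1' := insert e (M1.erase e') with hM1'
        have hsub' : M1' ⊆ M1 ∪ M2 := by
          intro x hx
          rcases Finset.mem_insert.mp hx with rfl | hx
          · exact Finset.mem_union_right _ heM2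
          · exact Finset.mem_union_left _ (Finset.mem_of_mem_erase hx)
        have h11' : ∀ p ∈ M1', ∀ q ∈ M1', p.1 = q.1 → p = q := by
          intro p hp q hq hpq
          rcases Finset.mem_insert.mp hp with rfl | hp' <;>
            rcases Finset.mem_insert.mp hq with rfl | hq'
          · rfl
          · exfalso
            have : q = e' := h11 q (Finset.mem_of_mem_erase hq') e' he'M1
              (by rw [← hpq, ha'])
            exact (Finset.mem_erase.mp hq').1 this
          · exfalso
            have : p = e' := h11 p (Finset.mem_of_mem_erase hp') e' he'M1
              (by rw [hpq, ha'])
            exact (Finset.mem_erase.mp hp').1 this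
          · exact h11 p (Finset.mem_of_mem_erase hp') q (Finset.mem_of_mem_erase hq') hpq
        have h12' : ∀ p ∈ M1', ∀ q ∈ M1', p.2 = q.2 → p = q := by
          intro p hp q hq hpq
          rcases Finset.mem_insert.mp hp with rfl | hp' <;>
            rcases Finset.mem_insert.mp hq with rfl | hq'
          · rfl
          · exact absurd hpq.symm (hb q (Finset.mem_of_mem_erase hq'))
          · exact absurd hpq (hb p (Finset.mem_of_mem_erase hp'))
          · exact h12 p (Finset.mem_of_mem_erase hp') q (Finset.mem_of_mem_erase hq') hpq
        have hdiff' : M2 \ M1' = (M2 \ M1).erase e := by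
          ext x
          simp only [Finset.mem_sdiff, Finset.mem_erase, hM1', Finset.mem_insert,
            Finset.mem_erase, not_or]
          constructor
          · rintro ⟨hx2, hxe, hx1⟩
            refine ⟨hxe, hx2, fun hx1' => hx1 ⟨?_, hx1'⟩⟩
            rintro rfl; exact he'M2 hx2
          · rintro ⟨hxe, hx2, hx1⟩
            exact ⟨hx2, hxe, fun h => hx1 h.2⟩
        have hcard' : (M2 \ M1').card = n - 1 := by
          rw [hdiff', Finset.card_erase_of_mem hediff, hcard]
        obtain ⟨M, hMsub, hM1, hM2, hcovU, hcovV⟩ :=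
          ih (n-1) (by omega) M1' M2 hcard' h11' h12' h21 h22
        refine ⟨M, hMsub.trans (Finset.union_subset hsub' Finset.subset_union_right),
          hM1, hM2, ?_, hcovV⟩
        intro p hp
        by_cases hpe' : p = e'
        · obtain ⟨q, hq, hq1⟩ := hcovU e (Finset.mem_insert_self _ _)
          exact ⟨q, hq, by rw [hq1, ← ha', hpe']⟩
        · exact hcovU p (Finset.mem_insert_of_mem (Finset.mem_erase.mpr ⟨hpe', hp⟩))
      · -- insert case
        push_neg at ha
        set M1' := insert e M1 with hM1'
        have h11' : ∀ p ∈ M1', ∀ q ∈ M1', p.1 = q.1 → p = q := by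
          intro p hp q hq hpq
          rcases Finset.mem_insert.mp hp with rfl | hp' <;>
            rcases Finset.mem_insert.mp hq with rfl | hq'
          · rfl
          · exact absurd hpq.symm (ha q hq')
          · exact absurd hpq (ha p hp')
          · exact h11 p hp' q hq' hpq
        have h12' : ∀ p ∈ M1', ∀ q ∈ M1', p.2 = q.2 → p = q := by
          intro p hp q hq hpq
          rcases Finset.mem_insert.mp hp with rfl | hp' <;>
            rcases Finset.mem_insert.mp hq with rfl | hq'
          · rfl
          · exact absurd hpq.symm (hb q hq')
          · exact absurd hpq (hb p hp')
          · exact h12 p hp' q hq' hpq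
        have hdiff' : M2 \ M1' = (M2 \ M1).erase e := by
          ext x
          simp only [Finset.mem_sdiff, Finset.mem_erase, hM1', Finset.mem_insert, not_or]
          tauto
        have hcard' : (M2 \ M1').card = n - 1 := by
          rw [hdiff', Finset.card_erase_of_mem hediff, hcard]
        obtain ⟨M, hMsub, hM1, hM2, hcovU, hcovV⟩ :=
          ih (n-1) (by omega) M1' M2 hcard' h11' h12' h21 h22
        have hsub' : M1' ⊆ M1 ∪ M2 := by
          intro x hx
          rcases Finset.mem_insert.mp hx with rfl | hx
          · exact Finset.mem_union_right _ heM2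
          · exact Finset.mem_union_left _ hx
        exact ⟨M, hMsub.trans (Finset.union_subset hsub' Finset.subset_union_right),
          hM1, hM2, fun p hp => hcovU p (Finset.mem_insert_of_mem hp), hcovV⟩

section Sat
variable {U V : Type*} [Fintype U] [Fintype V] [DecidableEq U] [DecidableEq V]

/-- From a minimum-sum integral dual, extract a tight matching saturating
all left vertices with positive potential. -/
lemma saturating_matching (E : Finset (U × V)) (w : U × V → ℚ) (u : U → ℚ) (v : V → ℚ)
    (hd : Dual E w u v) (hui : ∀ i, Zq (u i)) (hvi : ∀ j, Zq (v j))
    (hw : ∀ e ∈ E, Zq (w e))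
    (hmin : ∀ u' v', Dual E w u' v' → (∀ i, Zq (u' i)) → (∀ j, Zq (v' j)) →
      (∑ i, u i) + (∑ j, v j) ≤ (∑ i, u' i) + (∑ j, v' j)) :
    ∃ M1 : Finset (U × V), M1 ⊆ E ∧
      (∀ e ∈ M1, ∀ e' ∈ M1, e.1 = e'.1 → e = e') ∧
      (∀ e ∈ M1, ∀ e' ∈ M1, e.2 = e'.2 → e = e') ∧
      (∀ e ∈ M1, u e.1 + v e.2 = w e) ∧
      (∀ i, 0 < u i → ∃ j, (i, j) ∈ M1) := by
  obtain ⟨hu0, hv0, hc⟩ := hd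
  -- tight neighbors
  set t : U → Finset V :=
    fun i => (E.filter (fun e => e.1 = i ∧ u e.1 + v e.2 = w e)).image Prod.snd with ht
  have hall : ∀ s : Finset {i : U // 0 < u i}, s.card ≤ (s.biUnion (fun x => t x.1)).card := by
    intro s
    by_contra hlt
    push_neg at hlt
    set A : Finset U := s.image Subtype.val with hA
    set B : Finset V := s.biUnion (fun x => t x.1) with hB
    have hAcard : A.card = s.card :=
      Finset.card_image_of_injective _ Subtype.val_injective
    -- adjusted dual
    set u' : U → ℚ := fun i => u i - (if i ∈ A then 1 else 0) with hu'
    set v' : V → ℚ := fun j => v j + (if j ∈ B then 1 else 0) with hv'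
    have hvge : ∀ j, v j ≤ v' j := by
      intro j; rw [hv']; dsimp only; split <;> linarith
    have huA : ∀ i ∈ A, 1 ≤ u i := by
      intro i hi
      obtain ⟨x, _, rfl⟩ := Finset.mem_image.mp hi
      have := Zq.add_one_le Zq.zero (hui x.1) x.2
      linarith
    have hd' : Dual E w u' v' := by
      refine ⟨?_, ?_, ?_⟩
      · intro i; rw [hu']; dsimp only; split
        · have := huA i ‹_›; linarith
        · linarith [hu0 i]
      · intro j; rw [hv']; dsimp only; split
        · linarith [hv0 j]
        · linarith [hv0 j]
      · intro e heE
        by_cases hA1 : e.1 ∈ A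
        · by_cases htight : u e.1 + v e.2 = w e
          · have hB2 : e.2 ∈ B := by
              obtain ⟨x, hxs, hx1⟩ := Finset.mem_image.mp hA1
              refine Finset.mem_biUnion.mpr ⟨x, hxs, ?_⟩
              rw [ht]; dsimp only
              exact Finset.mem_image.mpr ⟨e, Finset.mem_filter.mpr ⟨heE, hx1.symm, htight⟩, rfl⟩
            rw [hu', hv']; dsimp only
            rw [if_pos hA1, if_pos hB2]; linarith
          · have hlt' : w e < u e.1 + v e.2 := lt_of_le_of_ne (hc e heE) (fun h => htight h.symm)
            have := Zq.add_one_le (hw e heE) ((hui e.1).add (hvi e.2)) hlt'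
            have := hvge e.2
            rw [hu']; dsimp only
            rw [if_pos hA1]; linarith
        · have := hvge e.2
          rw [hu']; dsimp only
          rw [if_neg hA1]; linarith [hc e heE]
    have hsum' : (∑ i, u' i) + (∑ j, v' j) =
        (∑ i, u i) + (∑ j, v j) - A.card + B.card := by
      rw [hu', hv']
      rw [Finset.sum_sub_distrib, Finset.sum_add_distrib]
      have h1 : (∑ i : U, if i ∈ A then (1:ℚ) else 0) = A.card := by
        rw [Finset.sum_ite_mem, Finset.univ_inter, Finset.sum_const, nsmul_eq_mul, mul_one]
      have h2 : (∑ j : V, if j ∈ B then (1:ℚ) else 0) = B.card := by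
        rw [Finset.sum_ite_mem, Finset.univ_inter, Finset.sum_const, nsmul_eq_mul, mul_one]
      rw [h1, h2]; ring
    have hBA : (B.card : ℚ) < A.card := by
      rw [hAcard]; exact_mod_cast hlt
    have hZu' : ∀ i, Zq (u' i) := by
      intro i; rw [hu']; dsimp only
      exact (hui i).sub (by split <;> [exact Zq.one; exact Zq.zero])
    have hZv' : ∀ j, Zq (v' j) := by
      intro j; rw [hv']; dsimp only
      exact (hvi j).add (by split <;> [exact Zq.one; exact Zq.zero])
    have := hmin u' v' hd' hZu' hZv'
    rw [hsum'] at this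
    linarith
  obtain ⟨f, hfinj, hft⟩ := (Finset.all_card_le_biUnion_card_iff_exists_injective _).mp hall
  refine ⟨(Finset.univ : Finset {i : U // 0 < u i}).image (fun x => (x.1, f x)), ?_, ?_, ?_, ?_, ?_⟩
  · intro p hp
    obtain ⟨x, _, rfl⟩ := Finset.mem_image.mp hp
    have := hft x
    rw [ht] at this; dsimp only at this
    obtain ⟨e, he, he2⟩ := Finset.mem_image.mp this
    obtain ⟨heE, he1, _⟩ := Finset.mem_filter.mp he
    have : e = (x.1, f x) := Prod.ext he1 he2
    rwa [← this]
  · intro p hp q hq hpq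
    obtain ⟨x, _, rfl⟩ := Finset.mem_image.mp hp
    obtain ⟨y, _, rfl⟩ := Finset.mem_image.mp hq
    have : x = y := Subtype.ext hpq
    rw [this]
  · intro p hp q hq hpq
    obtain ⟨x, _, rfl⟩ := Finset.mem_image.mp hp
    obtain ⟨y, _, rfl⟩ := Finset.mem_image.mp hq
    have : x = y := hfinj hpq
    rw [this]
  · intro p hp
    obtain ⟨x, _, rfl⟩ := Finset.mem_image.mp hp
    have := hft x
    rw [ht] at this; dsimp only at this
    obtain ⟨e, he, he2⟩ := Finset.mem_image.mp this
    obtain ⟨heE, he1, htight⟩ := Finset.mem_filter.mp he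
    have : e = (x.1, f x) := Prod.ext he1 he2
    rw [← this]; exact htight
  · intro i hi
    exact ⟨f ⟨i, hi⟩, Finset.mem_image.mpr ⟨⟨i, hi⟩, Finset.mem_univ _, rfl⟩⟩

end Sat

section Egervary
variable {U V : Type*} [Fintype U] [Fintype V] [DecidableEq U] [DecidableEq V]

lemma dual_swap (E : Finset (U × V)) (w : U × V → ℚ) (u : U → ℚ) (v : V → ℚ)
    (hd : Dual E w u v) :
    Dual (E.image Prod.swap) (fun p => w p.swap) v u := by
  refine ⟨hd.2.1, hd.1, ?_⟩
  intro e' he'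
  obtain ⟨e, heE, rfl⟩ := Finset.mem_image.mp he'
  have := hd.2.2 e heE
  simp only [Prod.swap_swap, Prod.fst_swap, Prod.snd_swap]
  linarith

/-- Egerváry's theorem for integral weights. -/
theorem exists_opt_dual_int (E : Finset (U × V)) (w : U × V → ℚ)
    (hw : ∀ e ∈ E, Zq (w e)) :
    ∃ u v, Dual E w u v ∧ (∑ i, u i) + (∑ j, v j) = maxWeight E w := by
  -- initial integral dual
  have hinit : ∃ n : ℕ, ∃ u v, Dual E w u v ∧ (∀ i, Zq (u i)) ∧ (∀ j, Zq (v j)) ∧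
      (∑ i, u i) + (∑ j, v j) = (n : ℚ) := by
    set u0 : U → ℚ := fun _ => ∑ e ∈ E, max (w e) 0 with hu0def
    have hu0nn : (0:ℚ) ≤ ∑ e ∈ E, max (w e) 0 :=
      Finset.sum_nonneg (fun e _ => le_max_right _ _)
    have hd0 : Dual E w u0 (fun _ => 0) := by
      refine ⟨fun i => hu0nn, fun j => le_refl 0, ?_⟩
      intro e heE
      have h1 : w e ≤ max (w e) 0 := le_max_left _ _
      have h2 : max (w e) 0 ≤ ∑ e' ∈ E, max (w e') 0 :=
        Finset.single_le_sum (f := fun e' => max (w e') 0) (fun e' _ => le_max_right _ _) heE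
      simp only [hu0def]; linarith
    have hZ : Zq (∑ e ∈ E, max (w e) 0) :=
      Zq.sum (fun e he => (hw e he).max Zq.zero)
    have hZsum : Zq ((∑ i, u0 i) + (∑ j : V, (0:ℚ))) := by
      refine Zq.add (Zq.sum (fun i _ => hZ)) (by simpa using Zq.zero)
    have hnn : (0:ℚ) ≤ (∑ i, u0 i) + (∑ j : V, (0:ℚ)) := by
      have : (0:ℚ) ≤ ∑ i, u0 i := Finset.sum_nonneg (fun i _ => hu0nn)
      simpa using this
    obtain ⟨n, hn⟩ := hZsum.exists_nat hnn
    exact ⟨n, u0, fun _ => 0, hd0, fun i => hZ, fun j => Zq.zero, hn⟩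
  classical
  set P : ℕ → Prop := fun n => ∃ u v, Dual E w u v ∧ (∀ i, Zq (u i)) ∧ (∀ j, Zq (v j)) ∧
      (∑ i, u i) + (∑ j, v j) = (n : ℚ) with hP
  have hex : ∃ n, P n := hinit
  obtain ⟨u, v, hd, hui, hvi, hsum⟩ := Nat.find_spec hex
  have hmin : ∀ u' v', Dual E w u' v' → (∀ i, Zq (u' i)) → (∀ j, Zq (v' j)) →
      (∑ i, u i) + (∑ j, v j) ≤ (∑ i, u' i) + (∑ j, v' j) := by
    intro u' v' hd' hui' hvi'
    have hZ : Zq ((∑ i, u' i) + (∑ j, v' j)) :=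
      Zq.add (Zq.sum (fun i _ => hui' i)) (Zq.sum (fun j _ => hvi' j))
    have hnn : (0:ℚ) ≤ (∑ i, u' i) + (∑ j, v' j) :=
      add_nonneg (Finset.sum_nonneg (fun i _ => hd'.1 i))
        (Finset.sum_nonneg (fun j _ => hd'.2.1 j))
    obtain ⟨m, hm⟩ := hZ.exists_nat hnn
    have hmP : P m := ⟨u', v', hd', hui', hvi', hm⟩
    have := Nat.find_min' hex hmP
    rw [hsum, hm]
    exact_mod_cast this
  -- saturating matchings on both sides
  obtain ⟨M1, hM1E, hM1f, hM1s, hM1t, hM1cov⟩ :=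
    saturating_matching E w u v hd hui hvi hw hmin
  have hminswap : ∀ v' u', Dual (E.image Prod.swap) (fun p => w p.swap) v' u' →
      (∀ j, Zq (v' j)) → (∀ i, Zq (u' i)) →
      (∑ j, v j) + (∑ i, u i) ≤ (∑ j, v' j) + (∑ i, u' i) := by
    intro v' u' hd' hvi' hui'
    have hd'' : Dual E w u' v' := by
      refine ⟨hd'.2.1, hd'.1, ?_⟩
      intro e heE
      have := hd'.2.2 e.swap (Finset.mem_image_of_mem _ heE)
      simp only [Prod.swap_swap, Prod.fst_swap, Prod.snd_swap] at this
      linarith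
    have := hmin u' v' hd'' hui' hvi'
    linarith
  obtain ⟨M2', hM2'E, hM2'f, hM2's, hM2't, hM2'cov⟩ :=
    saturating_matching (E.image Prod.swap) (fun p => w p.swap) v u
      (dual_swap E w u v hd) hvi hui
      (by intro e' he'; obtain ⟨e, heE, rfl⟩ := Finset.mem_image.mp he'
          simpa [Prod.swap_swap] using hw e heE)
      hminswap
  set M2 : Finset (U × V) := M2'.image Prod.swap with hM2def
  have hM2E : M2 ⊆ E := by
    intro p hp
    obtain ⟨q, hq, rfl⟩ := Finset.mem_image.mp hp
    obtain ⟨e, heE, he⟩ := Finset.mem_image.mp (hM2'E hq)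
    rwa [← he, Prod.swap_swap]
  have hswapinj : ∀ {q q' : V × U}, q.swap = q'.swap → q = q' := by
    intro q q' h
    have := congrArg Prod.swap h
    simpa [Prod.swap_swap] using this
  have hM2f : ∀ e ∈ M2, ∀ e' ∈ M2, e.1 = e'.1 → e = e' := by
    intro e he e' he' h
    obtain ⟨q, hq, rfl⟩ := Finset.mem_image.mp he
    obtain ⟨q', hq', rfl⟩ := Finset.mem_image.mp he'
    exact congrArg Prod.swap (hM2's q hq q' hq' h)
  have hM2s : ∀ e ∈ M2, ∀ e' ∈ M2, e.2 = e'.2 → e = e' := by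
    intro e he e' he' h
    obtain ⟨q, hq, rfl⟩ := Finset.mem_image.mp he
    obtain ⟨q', hq', rfl⟩ := Finset.mem_image.mp he'
    exact congrArg Prod.swap (hM2'f q hq q' hq' h)
  have hM2t : ∀ e ∈ M2, u e.1 + v e.2 = w e := by
    intro e he
    obtain ⟨q, hq, rfl⟩ := Finset.mem_image.mp he
    have := hM2't q hq
    simp only [Prod.swap_swap, Prod.fst_swap, Prod.snd_swap] at this ⊢
    linarith
  have hM2cov : ∀ j, 0 < v j → ∃ i, (i, j) ∈ M2 := by
    intro j hj
    obtain ⟨i, hij⟩ := hM2'cov j hj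
    exact ⟨i, Finset.mem_image.mpr ⟨(j, i), hij, rfl⟩⟩
  -- combine
  obtain ⟨M, hMsub, hMf, hMs, hcovU, hcovV⟩ :=
    mendelsohn_dulmage (M2 \ M1).card M1 M2 rfl hM1f hM1s hM2f hM2s
  have hME : M ⊆ E := fun p hp => by
    rcases Finset.mem_union.mp (hMsub hp) with h | h
    · exact hM1E h
    · exact hM2E h
  have hMt : ∀ e ∈ M, u e.1 + v e.2 = w e := by
    intro e he
    rcases Finset.mem_union.mp (hMsub he) with h | h
    · exact hM1t e h
    · exact hM2t e h
  -- M has weight ∑u + ∑v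
  have hfst : ∑ e ∈ M, u e.1 = ∑ i, u i := by
    have h1 : ∑ i ∈ M.image Prod.fst, u i = ∑ e ∈ M, u e.1 :=
      Finset.sum_image (fun e he e' he' h => hMf e he e' he' h)
    rw [← h1]
    apply Finset.sum_subset (Finset.subset_univ _)
    intro i _ hi
    by_contra h0
    have hpos : 0 < u i := lt_of_le_of_ne (hd.1 i) (Ne.symm h0)
    obtain ⟨j, hij⟩ := hM1cov i hpos
    obtain ⟨q, hq, hq1⟩ := hcovU (i, j) hij
    exact hi (Finset.mem_image.mpr ⟨q, hq, hq1⟩)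
  have hsnd : ∑ e ∈ M, v e.2 = ∑ j, v j := by
    have h1 : ∑ j ∈ M.image Prod.snd, v j = ∑ e ∈ M, v e.2 :=
      Finset.sum_image (fun e he e' he' h => hMs e he e' he' h)
    rw [← h1]
    apply Finset.sum_subset (Finset.subset_univ _)
    intro j _ hj
    by_contra h0
    have hpos : 0 < v j := lt_of_le_of_ne (hd.2.1 j) (Ne.symm h0)
    obtain ⟨i, hij⟩ := hM2cov j hpos
    obtain ⟨q, hq, hq2⟩ := hcovV (i, j) hij
    exact hj (Finset.mem_image.mpr ⟨q, hq, hq2⟩)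
  have hwM : matchWeight w M = (∑ i, u i) + (∑ j, v j) := by
    unfold matchWeight
    calc ∑ e ∈ M, w e = ∑ e ∈ M, (u e.1 + v e.2) :=
          Finset.sum_congr rfl (fun e he => (hMt e he).symm)
      _ = (∑ e ∈ M, u e.1) + ∑ e ∈ M, v e.2 := Finset.sum_add_distrib
      _ = _ := by rw [hfst, hsnd]
  have hMmatch : IsMatching E M := ⟨hME, hMf, hMs⟩
  refine ⟨u, v, hd, le_antisymm ?_ ?_⟩
  · rw [← hwM]; exact matchWeight_le_maxWeight E w hMmatch
  · exact maxWeight_le E w (fun M' hM' => weak_duality E w hd hM')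

lemma den_dvd_Zq (q : ℚ) (N : ℕ) (h : q.den ∣ N) : Zq ((N : ℚ) * q) := by
  obtain ⟨k, hk⟩ := h
  refine ⟨(k : ℤ) * q.num, ?_⟩
  have hden : (q.den : ℚ) * q = q.num := by
    rw [mul_comm, Rat.mul_den_eq_num]
  rw [hk]
  push_cast
  rw [mul_comm (q.den : ℚ) (k : ℚ), mul_assoc, hden]

lemma maxWeight_smul (E : Finset (U × V)) (w : U × V → ℚ) (c : ℚ) (hc : 0 < c) :
    maxWeight E (fun e => c * w e) = c * maxWeight E w := by
  have hmw : ∀ M : Finset (U × V), matchWeight (fun e => c * w e) M = c * matchWeight w M := by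
    intro M; unfold matchWeight; rw [Finset.mul_sum]
  apply le_antisymm
  · apply maxWeight_le
    intro M hM
    rw [hmw]
    exact mul_le_mul_of_nonneg_left (matchWeight_le_maxWeight E w hM) hc.le
  · obtain ⟨M, hM, hMw⟩ := exists_max_matching E w
    rw [← hMw, ← hmw]
    exact matchWeight_le_maxWeight E _ hM

/-- Egerváry's theorem / existence of optimal duals, general rational weights. -/
theorem exists_opt_dual (E : Finset (U × V)) (w : U × V → ℚ) :
    ∃ u v, Dual E w u v ∧ (∑ i, u i) + (∑ j, v j) = maxWeight E w := by
  set N : ℕ := ∏ e ∈ E, (w e).den with hN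
  have hNpos : 0 < N := Finset.prod_pos (fun e _ => (w e).pos)
  have hNq : (0:ℚ) < (N:ℚ) := by exact_mod_cast hNpos
  have hdvd : ∀ e ∈ E, (w e).den ∣ N := fun e he => Finset.dvd_prod_of_mem _ he
  obtain ⟨u, v, hd, hsum⟩ := exists_opt_dual_int E (fun e => (N:ℚ) * w e)
    (fun e he => den_dvd_Zq (w e) N (hdvd e he))
  refine ⟨fun i => u i / N, fun j => v j / N, ⟨?_, ?_, ?_⟩, ?_⟩
  · intro i; exact div_nonneg (hd.1 i) hNq.le
  · intro j; exact div_nonneg (hd.2.1 j) hNq.le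
  · intro e heE
    have h := hd.2.2 e heE
    simp only at h
    rw [← add_div, le_div_iff₀ hNq, mul_comm]
    linarith
  · have hmax : (∑ i, u i) + (∑ j, v j) = (N:ℚ) * maxWeight E w := by
      rw [hsum, maxWeight_smul E w _ hNq]
    rw [← Finset.sum_div, ← Finset.sum_div, ← add_div, hmax]
    field_simp

end Egervary

section Main
variable {U V : Type*} [Fintype U] [Fintype V] [DecidableEq U] [DecidableEq V]

theorem essential_edge_not_unique'
    (E : Finset (U × V)) (w : U × V → ℚ) (hw : ∀ e ∈ E, 0 < w e)
    (i : U) (j : V) (he : (i, j) ∈ E)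
    (hess : ∀ M, IsMaxMatching E w M → (i, j) ∈ M) :
    ∃ (u : U → ℚ) (v : V → ℚ) (u' : U → ℚ) (v' : V → ℚ),
      InCore E w u v ∧ InCore E w u' v' ∧ (u i ≠ u' i ∨ v j ≠ v' j) := by
  -- the best value among matchings avoiding (i,j)
  set F := (E.powerset.filter (fun M => IsMatching E M ∧ (i,j) ∉ M)) with hF
  have hFne : F.Nonempty := ⟨∅, by simp [hF, IsMatching]⟩
  set b := F.sup' hFne (matchWeight w) with hb
  have hble : b < maxWeight E w := by
    obtain ⟨M0, hM0F, hM0w⟩ := Finset.exists_mem_eq_sup' hFne (matchWeight w)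
    rw [hF, Finset.mem_filter] at hM0F
    obtain ⟨hM0p, hM0m, hM0ij⟩ := hM0F
    have hle : matchWeight w M0 ≤ maxWeight E w := matchWeight_le_maxWeight E w hM0m
    rcases lt_or_eq_of_le hle with h | h
    · rw [hb, hM0w]; exact h
    · exact absurd (hess M0 ⟨hM0m, h⟩) hM0ij
  set ε := maxWeight E w - b with hε
  have hεpos : 0 < ε := by rw [hε]; linarith
  set w' := Function.update w (i,j) (w (i,j) - ε) with hw'
  have hw'ij : w' (i,j) = w (i,j) - ε := Function.update_self _ _ _
  have hw'ne : ∀ e : U × V, e ≠ (i,j) → w' e = w e :=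
    fun e hne => Function.update_of_ne hne _ _
  have hwt1 : ∀ M : Finset (U × V), (i,j) ∈ M →
      matchWeight w' M = matchWeight w M - ε := by
    intro M hij
    unfold matchWeight
    rw [hw', Finset.sum_update_of_mem hij]
    rw [Finset.sum_eq_add_sum_sdiff_singleton_of_mem hij w]
    ring
  have hwt2 : ∀ M : Finset (U × V), (i,j) ∉ M →
      matchWeight w' M = matchWeight w M := by
    intro M hij
    unfold matchWeight
    exact Finset.sum_congr rfl (fun e heM => hw'ne e (fun h => hij (h ▸ heM)))
  have hmax' : maxWeight E w' = maxWeight E w - ε := by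
    apply le_antisymm
    · apply maxWeight_le
      intro M hM
      by_cases hij : (i,j) ∈ M
      · rw [hwt1 M hij]
        linarith [matchWeight_le_maxWeight E w hM]
      · rw [hwt2 M hij]
        have : matchWeight w M ≤ b :=
          Finset.le_sup' (matchWeight w)
            (by rw [hF, Finset.mem_filter, Finset.mem_powerset]; exact ⟨hM.1, hM, hij⟩)
        rw [hε]; linarith
    · obtain ⟨M, hM, hMw⟩ := exists_max_matching E w
      have hij : (i,j) ∈ M := hess M ⟨hM, hMw⟩
      have := matchWeight_le_maxWeight E w' hM
      rw [hwt1 M hij, hMw] at this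
      linarith
  obtain ⟨u, v, hd, hsum⟩ := exists_opt_dual E w'
  have hsum' : (∑ x, u x) + (∑ y, v y) = maxWeight E w - ε := by rw [hsum, hmax']
  -- candidate 1 : add ε to u i
  set u1 := Function.update u i (u i + ε) with hu1
  have hu1le : ∀ x, u x ≤ u1 x := by
    intro x
    rcases eq_or_ne x i with rfl | hx
    · rw [hu1, Function.update_self]; linarith
    · rw [hu1, Function.update_of_ne hx]
  have hsumu1 : ∑ x, u1 x = (∑ x, u x) + ε := by
    rw [hu1, Finset.sum_update_of_mem (Finset.mem_univ i),
      Finset.sum_eq_add_sum_sdiff_singleton_of_mem (Finset.mem_univ i) u]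
    ring
  have hcore1 : InCore E w u1 v := by
    refine ⟨?_, hd.2.1, ?_, ?_⟩
    · intro x; linarith [hd.1 x, hu1le x]
    · intro e heE
      by_cases hij : e = (i,j)
      · subst hij
        have := hd.2.2 (i,j) heE
        rw [hw'ij] at this
        simp only [hu1, Function.update_self]
        dsimp only at this ⊢
        linarith
      · have := hd.2.2 e heE
        rw [hw'ne e hij] at this
        linarith [hu1le e.1]
    · rw [hsumu1]; linarith
  -- candidate 2 : add ε to v j
  set v2 := Function.update v j (v j + ε) with hv2
  have hv2le : ∀ y, v y ≤ v2 y := by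
    intro y
    rcases eq_or_ne y j with rfl | hy
    · rw [hv2, Function.update_self]; linarith
    · rw [hv2, Function.update_of_ne hy]
  have hsumv2 : ∑ y, v2 y = (∑ y, v y) + ε := by
    rw [hv2, Finset.sum_update_of_mem (Finset.mem_univ j),
      Finset.sum_eq_add_sum_sdiff_singleton_of_mem (Finset.mem_univ j) v]
    ring
  have hcore2 : InCore E w u v2 := by
    refine ⟨hd.1, ?_, ?_, ?_⟩
    · intro y; linarith [hd.2.1 y, hv2le y]
    · intro e heE
      by_cases hij : e = (i,j)
      · subst hij
        have := hd.2.2 (i,j) heE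
        rw [hw'ij] at this
        simp only [hv2, Function.update_self]
        dsimp only at this ⊢
        linarith
      · have := hd.2.2 e heE
        rw [hw'ne e hij] at this
        linarith [hv2le e.2]
    · rw [hsumv2]; linarith
  refine ⟨u1, v, u, v2, hcore1, hcore2, Or.inl ?_⟩
  rw [hu1, Function.update_self]
  exact ne_of_gt (by linarith)

end Main

/-- Every essential edge admits more than one core imputation restricted to its
endpoints: two core imputations exist that differ on `{i, j}`. -/
theorem essential_edge_not_unique {U V : Type*} [Fintype U] [Fintype V]
    [DecidableEq U] [DecidableEq V]
    (E : Finset (U × V)) (w : U × V → ℚ) (hw : ∀ e ∈ E, 0 < w e)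
    (i : U) (j : V) (he : (i, j) ∈ E)
    (hess : ∀ M, IsMaxMatching E w M → (i, j) ∈ M) :
    ∃ (u : U → ℚ) (v : V → ℚ) (u' : U → ℚ) (v' : V → ℚ),
      InCore E w u v ∧ InCore E w u' v' ∧ (u i ≠ u' i ∨ v j ≠ v' j) :=
  essential_edge_not_unique' E w hw i j he hess
end

section
/- Let C be a connected component of the subgraph of tight-everywhere (essential and viable) edges of the assignment game that consists of viable edges and contains at least one viable vertex. Then every vertex of C has the same profit share in all core imputations (C is a unique imputation component). -/
open scoped Classical

/-- An edge is viable if it is in some but not every maximum weight matching. -/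
def ViableEdge {U V : Type*} [DecidableEq U] [DecidableEq V]
    (E : Finset (U × V)) (w : U × V → ℚ) (e : U × V) : Prop :=
  (∃ M, IsMaxMatching E w M ∧ e ∈ M) ∧ (∃ M, IsMaxMatching E w M ∧ e ∉ M)

/-- A vertex is viable if it is matched in some but not every maximum weight
matching. -/
def ViableVertex {U V : Type*} [DecidableEq U] [DecidableEq V]
    (E : Finset (U × V)) (w : U × V → ℚ) (q : U ⊕ V) : Prop :=
  (∃ M, IsMaxMatching E w M ∧ MatchedIn M q) ∧
    (∃ M, IsMaxMatching E w M ∧ ¬ MatchedIn M q)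

/-- Adjacency via essential-or-viable edges (the edges tight in every core
imputation, i.e. those belonging to some maximum weight matching). -/
def TightAdj {U V : Type*} [DecidableEq U] [DecidableEq V]
    (E : Finset (U × V)) (w : U × V → ℚ) (q q' : U ⊕ V) : Prop :=
  ∃ e ∈ E, (∃ M, IsMaxMatching E w M ∧ e ∈ M) ∧
    ((q = Sum.inl e.1 ∧ q' = Sum.inr e.2) ∨ (q = Sum.inr e.2 ∧ q' = Sum.inl e.1))

/-- Adjacency via viable edges. -/
def ViableAdj {U V : Type*} [DecidableEq U] [DecidableEq V]
    (E : Finset (U × V)) (w : U × V → ℚ) (q q' : U ⊕ V) : Prop :=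
  ∃ e ∈ E, ViableEdge E w e ∧
    ((q = Sum.inl e.1 ∧ q' = Sum.inr e.2) ∨ (q = Sum.inr e.2 ∧ q' = Sum.inl e.1))

lemma core_facts {U V : Type*} [Fintype U] [Fintype V] [DecidableEq U] [DecidableEq V]
    (E : Finset (U × V)) (w : U × V → ℚ) (u : U → ℚ) (v : V → ℚ)
    (h : InCore E w u v) (M : Finset (U × V)) (hM : IsMaxMatching E w M) :
    (∀ e ∈ M, u e.1 + v e.2 = w e) ∧ (∀ q, ¬ MatchedIn M q → Sum.elim u v q = 0) := by
  obtain ⟨hu, hv, hle, hsum⟩ := h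
  obtain ⟨⟨hME, hinj1, hinj2⟩, hmw⟩ := hM
  have hA : ∀ e ∈ M, w e ≤ u e.1 + v e.2 := fun e he => hle e (hME he)
  have hB1 : ∑ i ∈ M.image Prod.fst, u i = ∑ e ∈ M, u e.1 :=
    Finset.sum_image (fun e he e' he' h => hinj1 e he e' he' h)
  have hB2 : ∑ j ∈ M.image Prod.snd, v j = ∑ e ∈ M, v e.2 :=
    Finset.sum_image (fun e he e' he' h => hinj2 e he e' he' h)
  have hC1 : ∑ i ∈ M.image Prod.fst, u i ≤ ∑ i, u i :=
    Finset.sum_le_sum_of_subset_of_nonneg (Finset.subset_univ _) (fun i _ _ => hu i)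
  have hC2 : ∑ j ∈ M.image Prod.snd, v j ≤ ∑ j, v j :=
    Finset.sum_le_sum_of_subset_of_nonneg (Finset.subset_univ _) (fun j _ _ => hv j)
  have hsplit : ∑ e ∈ M, (u e.1 + v e.2)
      = ∑ i ∈ M.image Prod.fst, u i + ∑ j ∈ M.image Prod.snd, v j := by
    rw [hB1, hB2, Finset.sum_add_distrib]
  have htot : matchWeight w M = (∑ i, u i) + (∑ j, v j) := by rw [hmw, hsum]
  have hWB : ∑ e ∈ M, w e ≤ ∑ e ∈ M, (u e.1 + v e.2) := Finset.sum_le_sum hA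
  have hBC : ∑ e ∈ M, (u e.1 + v e.2) ≤ (∑ i, u i) + (∑ j, v j) := by
    rw [hsplit]; exact add_le_add hC1 hC2
  have hMW : matchWeight w M = ∑ e ∈ M, w e := rfl
  have hWeq : ∑ e ∈ M, w e = ∑ e ∈ M, (u e.1 + v e.2) := by linarith
  have hBeq : ∑ e ∈ M, (u e.1 + v e.2) = (∑ i, u i) + (∑ j, v j) := by linarith
  constructor
  · intro e he
    exact ((Finset.sum_eq_sum_iff_of_le hA).mp hWeq e he).symm
  · -- sums over complements are zero
    have hC1' : ∑ i ∈ M.image Prod.fst, u i = ∑ i, u i := by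
      by_contra hne
      have h1 : ∑ i ∈ M.image Prod.fst, u i < ∑ i, u i := lt_of_le_of_ne hC1 hne
      have := hBeq
      rw [hsplit] at this
      linarith
    have hC2' : ∑ j ∈ M.image Prod.snd, v j = ∑ j, v j := by
      have := hBeq
      rw [hsplit, hC1'] at this
      linarith
    have hz1 : ∑ i ∈ Finset.univ \ M.image Prod.fst, u i = 0 := by
      have := Finset.sum_sdiff (Finset.subset_univ (M.image Prod.fst)) (f := u)
      rw [hC1'] at this
      linarith
    have hz2 : ∑ j ∈ Finset.univ \ M.image Prod.snd, v j = 0 := by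
      have := Finset.sum_sdiff (Finset.subset_univ (M.image Prod.snd)) (f := v)
      rw [hC2'] at this
      linarith
    intro q hq
    match q with
    | Sum.inl i =>
      have hi : i ∈ Finset.univ \ M.image Prod.fst := by
        simp only [Finset.mem_sdiff, Finset.mem_univ, true_and, Finset.mem_image]
        rintro ⟨e, he, rfl⟩
        exact hq ⟨e.2, by simpa using he⟩
      simpa using (Finset.sum_eq_zero_iff_of_nonneg
        (fun i _ => hu i)).mp hz1 i hi
    | Sum.inr j =>
      have hj : j ∈ Finset.univ \ M.image Prod.snd := by
        simp only [Finset.mem_sdiff, Finset.mem_univ, true_and, Finset.mem_image]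
        rintro ⟨e, he, rfl⟩
        exact hq ⟨e.1, by simpa using he⟩
      simpa using (Finset.sum_eq_zero_iff_of_nonneg
        (fun j _ => hv j)).mp hz2 j hj

/-- If a connected component of the tight subgraph consists of viable edges and
contains a viable vertex, then every vertex of the component has the same
profit in all core imputations (a unique imputation component). -/
theorem viable_vertex_component_unique {U V : Type*} [Fintype U] [Fintype V]
    [DecidableEq U] [DecidableEq V]
    (E : Finset (U × V)) (w : U × V → ℚ) (hw : ∀ e ∈ E, 0 < w e)
    (q0 : U ⊕ V) (hq0 : ViableVertex E w q0)
    (hcomp : ∀ e ∈ E, (∃ M, IsMaxMatching E w M ∧ e ∈ M) →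
      (Relation.ReflTransGen (TightAdj E w) q0 (Sum.inl e.1) ∨
        Relation.ReflTransGen (TightAdj E w) q0 (Sum.inr e.2)) →
      ViableEdge E w e) :
    ∀ q : U ⊕ V, Relation.ReflTransGen (TightAdj E w) q0 q →
      ∀ (u : U → ℚ) (v : V → ℚ) (u' : U → ℚ) (v' : V → ℚ),
        InCore E w u v → InCore E w u' v' →
        Sum.elim u v q = Sum.elim u' v' q := by
  intro q hq u v u' v' hc hc'
  induction hq with
  | refl =>
    obtain ⟨_, M, hM, hnm⟩ := hq0
    rw [(core_facts E w u v hc M hM).2 q0 hnm,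
        (core_facts E w u' v' hc' M hM).2 q0 hnm]
  | tail hsteps hstep ih =>
    obtain ⟨e, heE, ⟨M, hM, heM⟩, hcase⟩ := hstep
    have ht : u e.1 + v e.2 = w e := (core_facts E w u v hc M hM).1 e heM
    have ht' : u' e.1 + v' e.2 = w e := (core_facts E w u' v' hc' M hM).1 e heM
    rcases hcase with ⟨hb, hc2⟩ | ⟨hb, hc2⟩
    · subst hb; subst hc2
      simp only [Sum.elim_inl] at ih
      simp only [Sum.elim_inr]
      linarith
    · subst hb; subst hc2
      simp only [Sum.elim_inr] at ih
      simp only [Sum.elim_inl]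
      linarith
end
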